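/- arXiv:1704.03539 — 7 statements merged into one kernel-verified Lean document; each statement's English description precedes it below -/
import Mathlib

section
/- Fix n ≥ 0. Define the q-double factorial [2m−1]!!_q = ∏_{t=1}^m [2t−1]_q ∈ ℤ[q] (so the empty product for m = 0 is 1). Then the (n+1)×(n+1) matrix ([2(i+j)−1]!!_q)_{0≤i,j≤n} has SSNF diag(1, q^{binom(2,2)}[2]!_q, q^{binom(4,2)}[4]!_q, …, q^{binom(2n,2)}[2n]!_q) over ℤ[q], where binom(m,2) = m(m−1)/2. -/
namespace Stmt9

/-- `[m]_q = 1 + q + ⋯ + q^{m-1}` in `ℤ[q]`. -/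
noncomputable def qNat (m : ℕ) : Polynomial ℤ := ∑ i ∈ Finset.range m, Polynomial.X ^ i

/-- `[m]!_q = [1]_q [2]_q ⋯ [m]_q`. -/
noncomputable def qFactorial (m : ℕ) : Polynomial ℤ := ∏ i ∈ Finset.range m, qNat (i + 1)

/-- The `q`-double factorial `[2m-1]!!_q = [1]_q [3]_q ⋯ [2m-1]_q`. -/
noncomputable def qDoubleFactorial (m : ℕ) : Polynomial ℤ :=
  ∏ t ∈ Finset.range m, qNat (2 * t + 1)

/-- `A` has special Smith normal form `diag d` over `R`: `P * A * Q = diagonal d` for some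
`P, Q` of determinant `1`, and `d j ∣ d i` whenever `j ≤ i`. -/
def HasSSNF {R : Type*} [CommRing R] {n : ℕ} (A : Matrix (Fin n) (Fin n) R) (d : Fin n → R) :
    Prop :=
  (∃ P Q : Matrix (Fin n) (Fin n) R, P.det = 1 ∧ Q.det = 1 ∧ P * A * Q = Matrix.diagonal d) ∧
  ∀ i j : Fin n, j ≤ i → d j ∣ d i

open Polynomial Finset


/-- Gaussian binomial coefficient at `q²`, via the Pascal recurrence. -/
noncomputable def B : ℕ → ℕ → Polynomial ℤ
  | 0, 0 => 1
  | 0, _+1 => 0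
  | _+1, 0 => 1
  | n+1, k+1 => B n k + X ^ (2*(k+1)) * B n (k+1)

/-- `[m]_{q²}`. -/
noncomputable def Phi (m : ℕ) : Polynomial ℤ := ∑ i ∈ Finset.range m, X ^ (2*i)

lemma qNat_succ (m : ℕ) : qNat (m+1) = qNat m + X ^ m := Finset.sum_range_succ _ _

lemma Phi_succ (m : ℕ) : Phi (m+1) = Phi m + X ^ (2*m) := Finset.sum_range_succ _ _

lemma qNat_add (a c : ℕ) : qNat (a + c) = qNat a + X ^ a * qNat c := by
  induction c with
  | zero => simp [qNat]
  | succ c ih =>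
      rw [← add_assoc, qNat_succ, ih, qNat_succ]
      ring

lemma Phi_add (a c : ℕ) : Phi (a + c) = Phi a + X ^ (2*a) * Phi c := by
  induction c with
  | zero => simp [Phi]
  | succ c ih =>
      rw [← add_assoc, Phi_succ, ih, Phi_succ]
      ring

lemma qNat_even (m : ℕ) : qNat (2*m) = (1 + X) * Phi m := by
  induction m with
  | zero => simp [qNat, Phi]
  | succ m ih =>
      rw [show 2*(m+1) = 2*m + 1 + 1 by ring, qNat_succ, qNat_succ, ih, Phi_succ]
      ring

lemma B_eq_zero : ∀ n k, n < k → B n k = 0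
  | 0, 0, h => absurd h (by omega)
  | 0, _+1, _ => rfl
  | n+1, 0, h => absurd h (by omega)
  | n+1, k+1, h => by
      rw [B, B_eq_zero n k (by omega), B_eq_zero n (k+1) (by omega)]
      ring

lemma B_zero (n : ℕ) : B n 0 = 1 := by cases n <;> rfl

lemma B_diag : ∀ n, B n n = 1
  | 0 => rfl
  | n+1 => by rw [B, B_diag n, B_eq_zero n (n+1) (by omega)]; ring

lemma absorb : ∀ n k, Phi (k+1) * B n (k+1) = Phi (n-k) * B n k
  | 0, k => by
      rw [B_eq_zero 0 (k+1) (by omega)]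
      cases k with
      | zero => simp [Phi]
      | succ k => rw [B_eq_zero 0 (k+1) (by omega)]; ring
  | n+1, k => by
      rcases le_or_gt k n with hk | hk
      · have hsplit : ∀ a b : ℕ, a + b = n + 1 → Phi a + X^(2*a) * Phi b = Phi (n+1) := by
          intro a b h; rw [← h, Phi_add]
        have key : Phi (k+1) * B (n+1) (k+1) = Phi (n+1) * B n k := by
          rw [B, mul_add, show Phi (k+1) * (X ^ (2*(k+1)) * B n (k+1)) =
            X ^ (2*(k+1)) * (Phi (k+1) * B n (k+1)) by ring, absorb n k,
            ← hsplit (k+1) (n-k) (by omega)]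
          ring
        rw [key]
        cases k with
        | zero => rw [B_zero, B_zero]; simp
        | succ j =>
            rw [show n + 1 - (j+1) = n - j by omega, B, mul_add,
              show Phi (n-j) * (X ^ (2*(j+1)) * B n (j+1)) =
                X ^ (2*(j+1)) * (Phi (n-j) * B n (j+1)) by ring,
              ← absorb n j, ← hsplit (j+1) (n-j) (by omega)]
            ring
      · rw [B_eq_zero (n+1) (k+1) (by omega), show n+1-k = 0 by omega]
        simp [Phi]



/-- `L_{n,k} = (n choose k)_{q²} ∏_{t=k}^{n-1} [2t+1]_q`. -/
noncomputable def Lf (n k : ℕ) : Polynomial ℤ := B n k * ∏ t ∈ Finset.Ico k n, qNat (2*t+1)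

noncomputable def dP (k : ℕ) : Polynomial ℤ := X ^ ((2*k).choose 2) * qFactorial (2*k)

noncomputable def lamP (k : ℕ) : Polynomial ℤ := X ^ (4*k+1) * (qNat (2*k+1) * qNat (2*k+2))

noncomputable def bP (k : ℕ) : Polynomial ℤ :=
  X ^ (2*k-1) * qNat (2*k) + X ^ (2*k) * qNat (2*k+1)

lemma qNat_zero : qNat 0 = 0 := rfl
lemma qNat_one : qNat 1 = 1 := by simp [qNat]
lemma qNat_two : qNat 2 = 1 + X := by simp [qNat, Finset.sum_range_succ]

lemma Lf_eq_zero {n k : ℕ} (h : n < k) : Lf n k = 0 := by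
  rw [Lf, B_eq_zero n k h, zero_mul]

lemma Lf_diag (n : ℕ) : Lf n n = 1 := by
  rw [Lf, B_diag, Finset.Ico_self, Finset.prod_empty, one_mul]

lemma Lf_zero (n : ℕ) : Lf n 0 = qDoubleFactorial n := by
  rw [Lf, B_zero, one_mul, qDoubleFactorial, Finset.range_eq_Ico]

lemma B_one (n : ℕ) : B n 1 = Phi n := by
  induction n with
  | zero => rfl
  | succ n ih =>
      rw [B, ih, B_zero, show n + 1 = 1 + n by omega, Phi_add]
      simp [Phi]

lemma bP_succ (k : ℕ) : bP (k+1) = X^(2*k+1) * qNat (2*k+2) + X^(2*k+2) * qNat (2*k+3) := by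
  rw [bP, show 2*(k+1)-1 = 2*k+1 by omega, show 2*(k+1) = 2*k+2 by omega,
    show 2*k+2+1 = 2*k+3 by omega]

lemma star0 (n : ℕ) : qNat (2*n+1) = 1 + X * ((1+X) * Phi n) := by
  rw [show 2*n+1 = 1 + 2*n by omega, qNat_add, qNat_even, qNat_one, pow_one]

/-- The key Gaussian-binomial identity behind the three-term recurrence. -/
lemma star (n k : ℕ) : B (n+1) (k+1) * qNat (2*n+1) =
    X^(4*k+5) * qNat (2*k+4) * B n (k+2) + bP (k+1) * B n (k+1) + qNat (2*k+1) * B n k := by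
  rcases lt_trichotomy n k with h | rfl | h
  · rw [B_eq_zero (n+1) (k+1) (by omega), B_eq_zero n (k+2) (by omega),
      B_eq_zero n (k+1) (by omega), B_eq_zero n k (by omega)]
    ring
  · rw [B_diag, B_eq_zero n (n+2) (by omega), B_eq_zero n (n+1) (by omega), B_diag]
    ring
  · have hP : B (n+1) (k+1) = B n k + X^(2*(k+1)) * B n (k+1) := by rw [B]
    set a := B n k
    set b := B n (k+1)
    set c := B n (k+2)
    have f1 : qNat (2*n+1) = qNat (2*k+1) + X^(2*k+1) * ((1+X) * Phi (n-k)) := by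
      rw [show 2*n+1 = (2*k+1) + 2*(n-k) by omega, qNat_add, qNat_even]
    have f2 : qNat (2*n+1) = qNat (2*k+3) + X^(2*k+3) * ((1+X) * Phi (n-k-1)) := by
      rw [show 2*n+1 = (2*k+3) + 2*(n-k-1) by omega, qNat_add, qNat_even]
    have f3 : qNat (2*k+2) = (1+X) * Phi (k+1) := by
      rw [show 2*k+2 = 2*(k+1) by omega, qNat_even]
    have f4 : qNat (2*k+4) = (1+X) * Phi (k+2) := by
      rw [show 2*k+4 = 2*(k+2) by omega, qNat_even]
    have h1 : Phi (k+1) * b = Phi (n-k) * a := absorb n k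
    have h2 : Phi (k+2) * c = Phi (n-k-1) * b := by
      have := absorb n (k+1)
      rwa [show n - (k+1) = n-k-1 by omega] at this
    rw [hP, bP_succ, show 2*(k+1) = 2*k+2 by omega]
    linear_combination a * f1 + X^(2*k+2) * b * f2 - X^(2*k+1) * b * f3
      - X^(4*k+5) * c * f4 - X^(2*k+1)*(1+X) * h1 - X^(4*k+5)*(1+X) * h2

lemma rec0 (n : ℕ) : Lf (n+1) 0 = lamP 0 * Lf n 1 + bP 0 * Lf n 0 := by
  have hb : bP 0 = 1 := by simp [bP, qNat_zero, qNat_one]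
  rcases Nat.eq_zero_or_pos n with rfl | hn
  · rw [hb, Lf_eq_zero (show (0:ℕ) < 1 by omega), Lf_diag, Lf_zero]
    simp [qDoubleFactorial, qNat_one]
  · have hsplit : (∏ t ∈ Finset.Ico 0 (n+1), qNat (2*t+1)) =
        (∏ t ∈ Finset.Ico 0 n, qNat (2*t+1)) * qNat (2*n+1) :=
      Finset.prod_Ico_succ_top (by omega) _
    have hbot : (∏ t ∈ Finset.Ico 0 n, qNat (2*t+1)) =
        qNat 1 * ∏ t ∈ Finset.Ico 1 n, qNat (2*t+1) := by
      have := Finset.prod_eq_prod_Ico_succ_bot hn (fun t => qNat (2*t+1))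
      simpa using this
    rw [Lf, Lf, Lf, B_zero, B_zero, B_one, hsplit, hbot, hb, lamP, star0 n, qNat_one,
      qNat_two]
    ring

lemma recS (n k : ℕ) :
    Lf (n+1) (k+1) = lamP (k+1) * Lf n (k+2) + bP (k+1) * Lf n (k+1) + Lf n k := by
  rcases lt_trichotomy n k with h | rfl | h
  · rw [Lf_eq_zero (show n+1 < k+1 by omega), Lf_eq_zero (show n < k+2 by omega),
      Lf_eq_zero (show n < k+1 by omega), Lf_eq_zero h]
    ring
  · rw [Lf_diag, Lf_eq_zero (by omega), Lf_eq_zero (by omega), Lf_diag]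
    ring
  · -- n ≥ k+1
    have hsplit : (∏ t ∈ Finset.Ico (k+1) (n+1), qNat (2*t+1)) =
        (∏ t ∈ Finset.Ico (k+1) n, qNat (2*t+1)) * qNat (2*n+1) :=
      Finset.prod_Ico_succ_top (by omega) _
    have hbot : (∏ t ∈ Finset.Ico k n, qNat (2*t+1)) =
        qNat (2*k+1) * ∏ t ∈ Finset.Ico (k+1) n, qNat (2*t+1) :=
      Finset.prod_eq_prod_Ico_succ_bot (by omega) _
    have hterm1 : X^(4*k+5) * qNat (2*k+4) * B n (k+2) *
        (∏ t ∈ Finset.Ico (k+1) n, qNat (2*t+1)) = lamP (k+1) * Lf n (k+2) := by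
      rcases eq_or_lt_of_le (show k+1 ≤ n from h) with heq | hlt
      · rw [← heq, B_eq_zero (k+1) (k+2) (by omega), Lf_eq_zero (show k+1 < k+2 by omega)]
        ring
      · have : (∏ t ∈ Finset.Ico (k+1) n, qNat (2*t+1)) =
            qNat (2*(k+1)+1) * ∏ t ∈ Finset.Ico (k+2) n, qNat (2*t+1) :=
          Finset.prod_eq_prod_Ico_succ_bot (by omega) _
        rw [this, Lf, lamP, show 4*(k+1)+1 = 4*k+5 by omega, show 2*(k+1)+1 = 2*k+3 by omega,
          show 2*(k+1)+2 = 2*k+4 by omega]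
        ring
    rw [Lf, hsplit, show B (n+1) (k+1) * ((∏ t ∈ Finset.Ico (k+1) n, qNat (2*t+1)) *
      qNat (2*n+1)) = (B (n+1) (k+1) * qNat (2*n+1)) *
      (∏ t ∈ Finset.Ico (k+1) n, qNat (2*t+1)) by ring, star, add_mul, add_mul, hterm1,
      Lf, Lf, Lf, hbot]
    ring



lemma qFactorial_succ (m : ℕ) : qFactorial (m+1) = qFactorial m * qNat (m+1) :=
  Finset.prod_range_succ _ _

lemma choose_step (m : ℕ) : (m+1).choose 2 = m.choose 2 + m := by
  rw [Nat.choose_two_right, Nat.choose_two_right, ← Nat.triangle_succ]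

lemma lamP_dP (k : ℕ) : lamP k * dP k = dP (k+1) := by
  have hexp : (2*(k+1)).choose 2 = (2*k).choose 2 + (4*k+1) := by
    rw [show 2*(k+1) = 2*k+1+1 by omega, choose_step, choose_step]
    omega
  rw [lamP, dP, dP, hexp, show 2*(k+1) = 2*k+1+1 by omega, qFactorial_succ, qFactorial_succ,
    pow_add, show 2*k+1+1 = 2*k+2 by omega]
  ring

/-- The symmetric middle expression. -/
noncomputable def G (a b k : ℕ) : Polynomial ℤ :=
  dP (k+1) * (Lf a (k+1) * Lf b k + Lf a k * Lf b (k+1)) + bP k * dP k * (Lf a k * Lf b k)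

lemma toT (a b N : ℕ) (hb : b + 1 ≤ N) :
    ∑ k ∈ Finset.range N, Lf (a+1) k * dP k * Lf b k = ∑ k ∈ Finset.range N, G a b k := by
  obtain ⟨M, rfl⟩ : ∃ M, N = M + 1 := ⟨N-1, by omega⟩
  have e1 : ∑ k ∈ Finset.range (M+1), G a b k =
      (∑ k ∈ Finset.range (M+1), dP (k+1) * (Lf a (k+1) * Lf b k)) +
      ((∑ k ∈ Finset.range (M+1), bP k * dP k * (Lf a k * Lf b k)) +
       ∑ k ∈ Finset.range (M+1), dP (k+1) * (Lf a k * Lf b (k+1))) := by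
    rw [← Finset.sum_add_distrib, ← Finset.sum_add_distrib]
    exact Finset.sum_congr rfl fun k _ => by rw [G]; ring
  have e2 : ∑ k ∈ Finset.range (M+1), dP (k+1) * (Lf a (k+1) * Lf b k) =
      (∑ k ∈ Finset.range M, dP (k+1+1) * (Lf a (k+1+1) * Lf b (k+1))) +
        dP (0+1) * (Lf a (0+1) * Lf b 0) :=
    Finset.sum_range_succ' _ M
  have e3 : ∑ k ∈ Finset.range (M+1), bP k * dP k * (Lf a k * Lf b k) =
      (∑ k ∈ Finset.range M, bP (k+1) * dP (k+1) * (Lf a (k+1) * Lf b (k+1))) +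
        bP 0 * dP 0 * (Lf a 0 * Lf b 0) :=
    Finset.sum_range_succ' _ M
  have e4 : ∑ k ∈ Finset.range (M+1), dP (k+1) * (Lf a k * Lf b (k+1)) =
      (∑ k ∈ Finset.range M, dP (k+1) * (Lf a k * Lf b (k+1))) +
        dP (M+1) * (Lf a M * Lf b (M+1)) :=
    Finset.sum_range_succ _ M
  have hvan : Lf b (M+1) = 0 := Lf_eq_zero (by omega)
  have e5 : ∑ k ∈ Finset.range (M+1), Lf (a+1) k * dP k * Lf b k =
      (∑ k ∈ Finset.range M, Lf (a+1) (k+1) * dP (k+1) * Lf b (k+1)) +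
        Lf (a+1) 0 * dP 0 * Lf b 0 :=
    Finset.sum_range_succ' _ M
  have e6 : ∑ k ∈ Finset.range M, Lf (a+1) (k+1) * dP (k+1) * Lf b (k+1) =
      ∑ k ∈ Finset.range M, (dP (k+1+1) * (Lf a (k+1+1) * Lf b (k+1)) +
        bP (k+1) * dP (k+1) * (Lf a (k+1) * Lf b (k+1)) +
        dP (k+1) * (Lf a k * Lf b (k+1))) := by
    refine Finset.sum_congr rfl fun k _ => ?_
    rw [recS a k, ← lamP_dP (k+1)]
    ring
  have e7 : Lf (a+1) 0 * dP 0 * Lf b 0 =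
      dP (0+1) * (Lf a (0+1) * Lf b 0) + bP 0 * dP 0 * (Lf a 0 * Lf b 0) := by
    rw [rec0 a, ← lamP_dP 0]
    ring
  rw [e5, e6, e7, e1, e2, e3, e4, hvan, Finset.sum_add_distrib, Finset.sum_add_distrib]
  ring

lemma G_symm (a b k : ℕ) : G a b k = G b a k := by rw [G, G]; ring

lemma step (a b N : ℕ) (ha : a + 1 ≤ N) (hb : b + 1 ≤ N) :
    ∑ k ∈ Finset.range N, Lf (a+1) k * dP k * Lf b k =
      ∑ k ∈ Finset.range N, Lf a k * dP k * Lf (b+1) k := by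
  rw [toT a b N hb, Finset.sum_congr rfl fun k _ => G_symm a b k, ← toT b a N ha]
  exact Finset.sum_congr rfl fun k _ => by ring

lemma base (i N : ℕ) (hN : 1 ≤ N) :
    ∑ k ∈ Finset.range N, Lf i k * dP k * Lf 0 k = qDoubleFactorial i := by
  rw [Finset.sum_eq_single 0]
  · rw [Lf_zero, Lf_diag 0, dP]
    simp [qFactorial]
  · intro k _ hk
    rw [Lf_eq_zero (show 0 < k by omega), mul_zero]
  · intro h
    exact absurd (Finset.mem_range.2 (by omega)) h

lemma key : ∀ j i N, i + j + 1 ≤ N →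
    ∑ k ∈ Finset.range N, Lf i k * dP k * Lf j k = qDoubleFactorial (i + j)
  | 0, i, N, h => by rw [base i N (by omega), Nat.add_zero]
  | j+1, i, N, h => by
      have h1 : ∑ k ∈ Finset.range N, Lf i k * dP k * Lf (j+1) k =
          ∑ k ∈ Finset.range N, Lf (j+1) k * dP k * Lf i k :=
        Finset.sum_congr rfl fun k _ => by ring
      have h2 := step j i N (by omega) (by omega)
      have h3 : ∑ k ∈ Finset.range N, Lf j k * dP k * Lf (i+1) k =
          ∑ k ∈ Finset.range N, Lf (i+1) k * dP k * Lf j k :=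
        Finset.sum_congr rfl fun k _ => by ring
      rw [h1, h2, h3, key j (i+1) N (by omega), show i+1+j = i+(j+1) by omega]

lemma key_pad (i j n : ℕ) (hi : i ≤ n) :
    ∑ k ∈ Finset.range (n+1), Lf i k * dP k * Lf j k = qDoubleFactorial (i + j) := by
  have hsub : Finset.range (n+1) ⊆ Finset.range (i+j+1+(n+1)) :=
    Finset.range_subset_range.2 (by omega)
  have := Finset.sum_subset hsub (f := fun k => Lf i k * dP k * Lf j k)
    (fun k _ hk => by
      simp only [Finset.mem_range, not_lt] at hk
      simp only [Lf_eq_zero (show i < k by omega), zero_mul])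
  rw [this, key j i _ (by omega)]

/-- The matrix `([2(i+j)-1]!!_q)_{0≤i,j≤n}` has SSNF
`diag(1, q^{C(2,2)}[2]!_q, q^{C(4,2)}[4]!_q, …, q^{C(2n,2)}[2n]!_q)` over `ℤ[q]`. -/
theorem qDoubleFactorial_hankel_SSNF (n : ℕ) :
    HasSSNF (fun i j : Fin (n+1) => qDoubleFactorial ((i : ℕ) + (j : ℕ)))
      (fun i => Polynomial.X ^ ((2 * (i : ℕ)).choose 2) * qFactorial (2 * (i : ℕ))) := by
  constructor
  · set Lm : Matrix (Fin (n+1)) (Fin (n+1)) (Polynomial ℤ) := fun i j => Lf i j with hLm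
    set D : Matrix (Fin (n+1)) (Fin (n+1)) (Polynomial ℤ) :=
      Matrix.diagonal (fun i : Fin (n+1) => dP i) with hD
    have hdetL : Lm.det = 1 := by
      rw [Matrix.det_of_lowerTriangular Lm (fun i j h => by
        exact Lf_eq_zero (show (i:ℕ) < j from h))]
      simp [hLm, Lf_diag]
    have hdetLT : Lm.transpose.det = 1 := by rw [Matrix.det_transpose, hdetL]
    have hA : (fun i j : Fin (n+1) => qDoubleFactorial ((i : ℕ) + (j : ℕ))) =
        Lm * D * Lm.transpose := by
      funext i j
      show qDoubleFactorial ((i : ℕ) + (j : ℕ)) = (Lm * D * Lm.transpose) i j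
      rw [Matrix.mul_apply]
      have : ∀ k : Fin (n+1), (Lm * D) i k * Lm.transpose k j = Lf i k * dP k * Lf j k := by
        intro k
        rw [Matrix.mul_diagonal]
        rfl
      rw [Finset.sum_congr rfl fun k _ => this k,
        Fin.sum_univ_eq_sum_range (fun k => Lf i k * dP k * Lf j k) (n+1),
        key_pad i j n (by omega)]
    refine ⟨Lm.adjugate, Lm.transpose.adjugate, ?_, ?_, ?_⟩
    · rw [Matrix.det_adjugate, hdetL, one_pow]
    · rw [Matrix.det_adjugate, hdetLT, one_pow]
    · rw [hA]
      calc Lm.adjugate * (Lm * D * Lm.transpose) * Lm.transpose.adjugate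
          = (Lm.adjugate * Lm) * D * (Lm.transpose * Lm.transpose.adjugate) := by
            simp only [Matrix.mul_assoc]
        _ = Matrix.diagonal (fun i : Fin (n+1) =>
              X ^ ((2 * (i : ℕ)).choose 2) * qFactorial (2 * (i : ℕ))) := by
            rw [Matrix.adjugate_mul, Matrix.mul_adjugate, hdetL, hdetLT, one_smul,
              Matrix.one_mul, Matrix.mul_one]
            rfl
  · intro i j hij
    refine mul_dvd_mul (pow_dvd_pow X (Nat.choose_le_choose 2 (by omega))) ?_
    exact Finset.prod_dvd_prod_of_subset _ _ _ (Finset.range_subset_range.2 (by omega))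

end Stmt9
end

section
/- Fix n ≥ 0. The (n+1)×(n+1) Hankel matrix of q-factorials ([i+j]!_q)_{0≤i,j≤n} has SSNF diag(1, q^{1²}([1]!_q)², q^{2²}([2]!_q)², …, q^{n²}([n]!_q)²) over ℤ[q]. -/
namespace Stmt10

/-- `[m]_q = 1 + q + ⋯ + q^{m-1}` in `ℤ[q]`. -/
noncomputable def qNat (m : ℕ) : Polynomial ℤ := ∑ i ∈ Finset.range m, Polynomial.X ^ i

/-- `[m]!_q = [1]_q [2]_q ⋯ [m]_q`. -/
noncomputable def qFactorial (m : ℕ) : Polynomial ℤ := ∏ i ∈ Finset.range m, qNat (i + 1)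

open Polynomial Finset Matrix

noncomputable def qChoose : ℕ → ℕ → Polynomial ℤ
  | _, 0 => 1
  | 0, _+1 => 0
  | m+1, k+1 => X^(k+1) * qChoose m (k+1) + qChoose m k

@[simp] lemma qChoose_zero_right (m : ℕ) : qChoose m 0 = 1 := by cases m <;> rfl
@[simp] lemma qChoose_zero_succ (k : ℕ) : qChoose 0 (k+1) = 0 := rfl
lemma qChoose_succ_succ (m k : ℕ) :
    qChoose (m+1) (k+1) = X^(k+1) * qChoose m (k+1) + qChoose m k := rfl

lemma qChoose_eq_zero_of_lt : ∀ {m k : ℕ}, m < k → qChoose m k = 0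
  | 0, _+1, _ => rfl
  | m+1, k+1, h => by
    rw [qChoose_succ_succ, qChoose_eq_zero_of_lt (by omega), qChoose_eq_zero_of_lt (by omega)]
    ring

@[simp] lemma qChoose_self : ∀ m : ℕ, qChoose m m = 1
  | 0 => rfl
  | m+1 => by
    rw [qChoose_succ_succ, qChoose_self m, qChoose_eq_zero_of_lt (Nat.lt_succ_self m)]
    ring

lemma qChoose_pascal' : ∀ (m k : ℕ),
    qChoose (m+1) (k+1) = qChoose m (k+1) + X^(m-k) * qChoose m k
  | 0, 0 => by simp [qChoose_succ_succ]
  | 0, k+1 => by simp [qChoose_succ_succ]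
  | m+1, 0 => by
      have d2 := qChoose_succ_succ (m+1) 0
      have d1 := qChoose_succ_succ m 0
      have p := qChoose_pascal' m 0
      simp only [Nat.sub_zero, qChoose_zero_right, pow_one, mul_one] at *
      linear_combination d2 + X * p - d1
  | m+1, k+1 => by
      rcases Nat.lt_or_ge m (k+1) with h | h
      · have hmk : m - k = 0 := by omega
        have hm1 : m + 1 - (k + 1) = 0 := by omega
        rw [qChoose_succ_succ (m+1) (k+1), qChoose_eq_zero_of_lt (show m+1 < k+1+1 by omega), hm1]
        ring
      · obtain ⟨a, rfl⟩ : ∃ a, m = a + (k + 1) := ⟨m - (k+1), by omega⟩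
        have d := qChoose_succ_succ (a+(k+1)+1) (k+1)
        have p2 := qChoose_pascal' (a+(k+1)) (k+1)
        have p1 := qChoose_pascal' (a+(k+1)) k
        have d2 := qChoose_succ_succ (a+(k+1)) (k+1)
        have d1 := qChoose_succ_succ (a+(k+1)) k
        rw [show a+(k+1) - (k+1) = a from by omega] at p2
        rw [show a+(k+1) - k = a + 1 from by omega] at p1
        rw [show a+(k+1)+1 - (k+1) = a + 1 from by omega]
        linear_combination d + X^(k+1+1) * p2 - d2 - X^(a+1) * d1 + p1

lemma qChoose_symm : ∀ (m k : ℕ), k ≤ m → qChoose m (m - k) = qChoose m k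
  | 0, 0, _ => rfl
  | m+1, 0, _ => by simp
  | m+1, k+1, h => by
      rcases Nat.eq_or_lt_of_le h with h' | h'
      · rw [← h']; simp
      · have hk : k ≤ m := by omega
        have h1 : m + 1 - (k + 1) = (m - (k+1)) + 1 := by omega
        rw [h1, qChoose_succ_succ, qChoose_pascal' m k]
        have h2 : m - (m - (k+1)) = k + 1 := by omega
        have h3 : m - (k+1) + 1 = m - k := by omega
        rw [← h2, qChoose_symm m (m - (k+1)) (by omega), h2, h3,
          qChoose_symm m k hk]
        have h4 : m - (k+1) = m - k - 1 := by omega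
        ring


lemma qNat_add (a b : ℕ) : qNat (a + b) = qNat a + X^a * qNat b := by
  simp only [qNat, Finset.mul_sum, ← pow_add]
  exact Finset.sum_range_add (fun i => X ^ i : ℕ → Polynomial ℤ) a b

lemma qFactorial_succ (m : ℕ) : qFactorial (m + 1) = qFactorial m * qNat (m + 1) :=
  Finset.prod_range_succ _ m

lemma qFactorial_mul_Ico {k m : ℕ} (h : k ≤ m) :
    qFactorial k * ∏ t ∈ Finset.Ico k m, qNat (t + 1) = qFactorial m :=
  Finset.prod_range_mul_prod_Ico _ h

lemma qChoose_mul_qFactorial : ∀ j i : ℕ,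
    qChoose (i + j) i * (qFactorial i * qFactorial j) = qFactorial (i + j)
  | 0, i => by simp [qFactorial]
  | j+1, 0 => by simp [qFactorial]
  | j+1, i+1 => by
      have p := qChoose_pascal' (i+j+1) i
      rw [show i+j+1-i = j+1 from by omega] at p
      have h1 := qChoose_mul_qFactorial j (i+1)
      rw [show i+1+j = i+j+1 from by omega] at h1
      have h2 := qChoose_mul_qFactorial (j+1) i
      rw [show i+(j+1) = i+j+1 from by omega] at h2
      have hq : qNat (i+j+1+1) = qNat (j+1) + X^(j+1) * qNat (i+1) := by
        rw [show i+j+1+1 = (j+1)+(i+1) from by omega]; exact qNat_add _ _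
      rw [show i+1+(j+1) = i+j+1+1 from by omega, p, qFactorial_succ (i+j+1), hq,
        qFactorial_succ i, qFactorial_succ j]
      rw [qFactorial_succ i] at h1
      rw [qFactorial_succ j] at h2
      linear_combination qNat (j+1) * h1 + X^(j+1) * qNat (i+1) * h2

lemma qVandermonde (j : ℕ) : ∀ i r : ℕ,
    ∑ k ∈ Finset.range (r+1), qChoose i k * qChoose j (r-k) * X^((i-k)*(r-k))
      = qChoose (i+j) r := by
  intro i
  induction i with
  | zero =>
    intro r
    rw [Finset.sum_eq_single 0]
    · simp
    · intro k _ hk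
      obtain ⟨k', rfl⟩ := Nat.exists_eq_succ_of_ne_zero hk
      simp
    · intro h; exact absurd (Finset.mem_range.2 (Nat.succ_pos r)) h
  | succ i ih =>
    intro r
    match r with
    | 0 => simp
    | s+1 =>
      have step : ∀ k ∈ Finset.range (s+2),
          qChoose (i+1) k * qChoose j (s+1-k) * X^((i+1-k)*(s+1-k))
          = X^(s+1) * (qChoose i k * qChoose j (s+1-k) * X^((i-k)*(s+1-k)))
            + (if k = 0 then 0 else
                qChoose i (k-1) * qChoose j (s+1-k) * X^((i-(k-1))*(s-(k-1)))) := by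
        intro k hk
        have hks : k ≤ s + 1 := by simpa using Nat.lt_succ_iff.1 (Finset.mem_range.1 hk)
        match k with
        | 0 =>
          simp only [if_pos, Nat.sub_zero, qChoose_zero_right, add_zero]
          rw [show (i+1)*(s+1) = (s+1) + i*(s+1) from by ring, pow_add]
          ring
        | k'+1 =>
          simp only [if_neg (Nat.succ_ne_zero k'), Nat.succ_sub_succ_eq_sub,
            Nat.add_sub_cancel, Nat.sub_zero]
          rw [qChoose_succ_succ i k']
          rcases Nat.lt_or_ge i (k'+1) with h | h
          · rw [qChoose_eq_zero_of_lt h]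
            ring
          · have hk's : k' ≤ s := by omega
            have h2 : (i-k')*(s-k') = (i-(k'+1))*(s-k') + (s-k') := by
              rw [show i - k' = (i-(k'+1)) + 1 from by omega]; ring
            have e : (k'+1) + (i-k')*(s-k') = (s+1) + (i-(k'+1))*(s-k') := by omega
            have hX : (X : Polynomial ℤ)^(k'+1) * X^((i-k')*(s-k')) = X^(s+1) * X^((i-(k'+1))*(s-k'))
                := by rw [← pow_add, ← pow_add, e]
            linear_combination qChoose i (k'+1) * qChoose j (s-k') * hX
      rw [Finset.sum_congr rfl step, Finset.sum_add_distrib, ← Finset.mul_sum,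
        ih (s+1), Finset.sum_range_succ']
      simp only [Nat.succ_ne_zero, if_false, if_pos, Nat.add_sub_cancel,
        Nat.succ_sub_succ_eq_sub, Nat.sub_zero, add_zero, ite_false, ite_true]
      rw [ih s, show i+1+j = (i+j)+1 from by omega, qChoose_succ_succ]

lemma qVW (i j : ℕ) :
    ∑ k ∈ Finset.range (i+1), X^(k^2) * (qChoose i k * qChoose j k)
      = qChoose (i+j) i := by
  have h := qVandermonde j i i
  rw [← Finset.sum_range_reflect] at h
  rw [← h]
  refine Finset.sum_congr rfl fun k hk => ?_
  have hk' : k ≤ i := Nat.lt_succ_iff.1 (Finset.mem_range.1 hk)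
  have e1 : i + 1 - 1 - k = i - k := by omega
  have e2 : i - (i - k) = k := by omega
  rw [e1, e2, qChoose_symm i k hk', pow_two]
  ring

noncomputable def Lmat (n : ℕ) : Matrix (Fin (n+1)) (Fin (n+1)) (Polynomial ℤ) :=
  Matrix.of fun i k =>
    qChoose (i : ℕ) (k : ℕ) * ∏ t ∈ Finset.Ico (k : ℕ) (i : ℕ), qNat (t + 1)

lemma Lmat_det (n : ℕ) : (Lmat n).det = 1 := by
  have htri : (Lmat n).BlockTriangular OrderDual.toDual := by
    intro i k h
    have : (i : ℕ) < (k : ℕ) := h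
    simp [Lmat, qChoose_eq_zero_of_lt this]
  rw [Matrix.det_of_lowerTriangular _ htri]
  apply Finset.prod_eq_one
  intro i _
  simp [Lmat]

lemma LDL (n : ℕ) (i j : Fin (n+1)) :
    ∑ k : Fin (n+1), Lmat n i k *
      ((X : Polynomial ℤ)^((k : ℕ)^2) * qFactorial (k : ℕ) ^ 2) * Lmat n j k
      = qFactorial ((i : ℕ) + (j : ℕ)) := by
  have hstep : ∀ k : Fin (n+1), Lmat n i k *
      ((X : Polynomial ℤ)^((k : ℕ)^2) * qFactorial (k : ℕ) ^ 2) * Lmat n j k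
      = X^((k : ℕ)^2) * (qChoose (i : ℕ) (k : ℕ) * qChoose (j : ℕ) (k : ℕ))
        * (qFactorial (i : ℕ) * qFactorial (j : ℕ)) := by
    intro k
    rcases Nat.lt_or_ge (i : ℕ) (k : ℕ) with h | h
    · simp [Lmat, qChoose_eq_zero_of_lt h]
    rcases Nat.lt_or_ge (j : ℕ) (k : ℕ) with h' | h'
    · simp [Lmat, qChoose_eq_zero_of_lt h']
    have hi := qFactorial_mul_Ico h
    have hj := qFactorial_mul_Ico h'
    simp only [Lmat, Matrix.of_apply]
    rw [← hi, ← hj]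
    ring
  rw [Fintype.sum_congr _ _ hstep]
  rw [Fin.sum_univ_eq_sum_range (fun k =>
    (X : Polynomial ℤ)^(k^2) * (qChoose (i : ℕ) k * qChoose (j : ℕ) k)
      * (qFactorial (i : ℕ) * qFactorial (j : ℕ)))]
  rw [← Finset.sum_mul]
  rw [← Finset.sum_subset (Finset.range_subset_range.2 (Nat.succ_le_succ (Nat.lt_succ_iff.1 i.2)))
    (fun k _ hk => by
      have hik : (i : ℕ) < k := by
        simp only [Finset.mem_range, Nat.lt_succ_iff, not_le] at hk; exact hk
      rw [qChoose_eq_zero_of_lt hik]; ring)]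
  rw [qVW, qChoose_mul_qFactorial]

/-- `A` has special Smith normal form `diag d` over `R`: `P * A * Q = diagonal d` for some
`P, Q` of determinant `1`, and `d j ∣ d i` whenever `j ≤ i`. -/
def HasSSNF {R : Type*} [CommRing R] {n : ℕ} (A : Matrix (Fin n) (Fin n) R) (d : Fin n → R) :
    Prop :=
  (∃ P Q : Matrix (Fin n) (Fin n) R, P.det = 1 ∧ Q.det = 1 ∧ P * A * Q = Matrix.diagonal d) ∧
  ∀ i j : Fin n, j ≤ i → d j ∣ d i

/-- The Hankel matrix of `q`-factorials `([i+j]!_q)_{0≤i,j≤n}` has SSNF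
`diag(1, q^{1²}([1]!_q)², q^{2²}([2]!_q)², …, q^{n²}([n]!_q)²)` over `ℤ[q]`. -/
theorem qFactorial_hankel_SSNF (n : ℕ) :
    HasSSNF (fun i j : Fin (n+1) => qFactorial ((i : ℕ) + (j : ℕ)))
      (fun i => Polynomial.X ^ ((i : ℕ) ^ 2) * qFactorial (i : ℕ) ^ 2) := by
  constructor
  · set L := Lmat n
    set d : Fin (n+1) → Polynomial ℤ :=
      fun i => Polynomial.X ^ ((i : ℕ) ^ 2) * qFactorial (i : ℕ) ^ 2 with hd
    have hL : L.det = 1 := Lmat_det n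
    have hLT : (Lᵀ).det = 1 := by rw [Matrix.det_transpose]; exact hL
    have huL : IsUnit L.det := hL ▸ isUnit_one
    have huLT : IsUnit (Lᵀ).det := hLT ▸ isUnit_one
    refine ⟨L⁻¹, (Lᵀ)⁻¹, ?_, ?_, ?_⟩
    · rw [Matrix.det_nonsing_inv, hL, Ring.inverse_one]
    · rw [Matrix.det_nonsing_inv, hLT, Ring.inverse_one]
    · have hA : L * Matrix.diagonal d * Lᵀ
          = (fun i j : Fin (n+1) => qFactorial ((i : ℕ) + (j : ℕ))) := by
        funext i j
        rw [Matrix.mul_apply]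
        have : ∀ k, (L * Matrix.diagonal d) i k * Lᵀ k j = L i k * d k * L j k := by
          intro k
          rw [Matrix.mul_diagonal, Matrix.transpose_apply]
        rw [Finset.sum_congr rfl fun k _ => this k]
        exact LDL n i j
      rw [← hA]
      rw [show L⁻¹ * (L * Matrix.diagonal d * Lᵀ) * (Lᵀ)⁻¹
          = (L⁻¹ * L) * Matrix.diagonal d * (Lᵀ * (Lᵀ)⁻¹) from by
        simp only [Matrix.mul_assoc]]
      rw [Matrix.nonsing_inv_mul _ huL, Matrix.mul_nonsing_inv _ huLT,
        Matrix.one_mul, Matrix.mul_one]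
  · intro i j hji
    have h : (j : ℕ) ≤ (i : ℕ) := hji
    exact mul_dvd_mul (pow_dvd_pow _ (Nat.pow_le_pow_left h 2))
      (pow_dvd_pow_of_dvd (Finset.prod_dvd_prod_of_subset _ _ _
        (Finset.range_subset_range.2 h)) 2)

end Stmt10
end

section
/- Let λ be a Young diagram with diagonal length d, and set D_{kk} = ∏_{s ∈ λ(k,k)} x_s for 1 ≤ k ≤ d+1 (so D_{d+1,d+1} = 1). Then there exist an upper unitriangular matrix P and a lower unitriangular matrix Q over ℤ[x] such that P·A(λ)·Q = diag(D_{11}, D_{22}, …, D_{d+1,d+1}). In particular, A(λ) has SSNF diag(1, D_{dd}, D_{d−1,d−1}, …, D_{11}) over ℤ[x]. -/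
/-- `T` is a subdiagram of the cell set `S`: `T ⊆ S` and `T` is downward closed in `S`. -/
def IsSubdiagram (S T : Finset (ℕ × ℕ)) : Prop :=
  T ⊆ S ∧ ∀ c ∈ T, ∀ c' ∈ S, c'.1 ≤ c.1 → c'.2 ≤ c.2 → c' ∈ T

instance (S T : Finset (ℕ × ℕ)) : Decidable (IsSubdiagram S T) := by
  unfold IsSubdiagram; infer_instance

/-- The generating function `GF(S) = ∑_T ∏_{s ∈ S∖T} x_s`, summed over subdiagrams `T ⊆ S`. -/
def GF {R : Type*} [CommRing R] (x : ℕ × ℕ → R) (S : Finset (ℕ × ℕ)) : R :=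
  ∑ T ∈ S.powerset.filter (fun T => IsSubdiagram S T), ∏ s ∈ S \ T, x s

/-- `A` has special Smith normal form `diag d` over `R`: `P * A * Q = diagonal d` for some
`P, Q` of determinant `1`, and `d j ∣ d i` whenever `j ≤ i`. -/
def HasSSNF {R : Type*} [CommRing R] {n : ℕ} (A : Matrix (Fin n) (Fin n) R) (d : Fin n → R) :
    Prop :=
  (∃ P Q : Matrix (Fin n) (Fin n) R, P.det = 1 ∧ Q.det = 1 ∧ P * A * Q = Matrix.diagonal d) ∧
  ∀ i j : Fin n, j ≤ i → d j ∣ d i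

namespace BS

open Finset

/-- Cells of `Y` weakly south-east of `(i, j)`. -/
def SS (Y : YoungDiagram) (i j : ℕ) : Finset (ℕ × ℕ) :=
  Y.cells.filter fun s => i ≤ s.1 ∧ j ≤ s.2

/-- North region: rows in `[i, k)`, columns `≥ k`. -/
def NN (Y : YoungDiagram) (i k : ℕ) : Finset (ℕ × ℕ) :=
  Y.cells.filter fun s => i ≤ s.1 ∧ s.1 < k ∧ k ≤ s.2

/-- West region: rows `≥ k`, columns in `[j, k)`. -/
def WW (Y : YoungDiagram) (k j : ℕ) : Finset (ℕ × ℕ) :=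
  Y.cells.filter fun s => k ≤ s.1 ∧ j ≤ s.2 ∧ s.2 < k

/-- Square region: rows in `[i, k)`, columns in `[j, k)`. -/
def FF (Y : YoungDiagram) (i j k : ℕ) : Finset (ℕ × ℕ) :=
  Y.cells.filter fun s => i ≤ s.1 ∧ s.1 < k ∧ j ≤ s.2 ∧ s.2 < k

lemma mem_SS {Y : YoungDiagram} {i j : ℕ} {s : ℕ × ℕ} :
    s ∈ SS Y i j ↔ s ∈ Y ∧ i ≤ s.1 ∧ j ≤ s.2 := by
  simp [SS, YoungDiagram.mem_cells]

lemma mem_NN {Y : YoungDiagram} {i k : ℕ} {s : ℕ × ℕ} :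
    s ∈ NN Y i k ↔ s ∈ Y ∧ i ≤ s.1 ∧ s.1 < k ∧ k ≤ s.2 := by
  simp [NN, YoungDiagram.mem_cells]

lemma mem_WW {Y : YoungDiagram} {k j : ℕ} {s : ℕ × ℕ} :
    s ∈ WW Y k j ↔ s ∈ Y ∧ k ≤ s.1 ∧ j ≤ s.2 ∧ s.2 < k := by
  simp [WW, YoungDiagram.mem_cells]

lemma mem_FF {Y : YoungDiagram} {i j k : ℕ} {s : ℕ × ℕ} :
    s ∈ FF Y i j k ↔ s ∈ Y ∧ i ≤ s.1 ∧ s.1 < k ∧ j ≤ s.2 ∧ s.2 < k := by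
  simp [FF, YoungDiagram.mem_cells]

/-- The finset of subdiagrams of `S`. -/
def sd (S : Finset (ℕ × ℕ)) : Finset (Finset (ℕ × ℕ)) :=
  S.powerset.filter fun T => IsSubdiagram S T

lemma mem_sd {S T : Finset (ℕ × ℕ)} : T ∈ sd S ↔ IsSubdiagram S T := by
  constructor
  · intro h; exact (Finset.mem_filter.1 h).2
  · intro h; exact Finset.mem_filter.2 ⟨Finset.mem_powerset.2 h.1, h⟩

lemma GF_def {R : Type*} [CommRing R] (x : ℕ × ℕ → R) (S : Finset (ℕ × ℕ)) :
    GF x S = ∑ T ∈ sd S, ∏ s ∈ S \ T, x s := rfl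

lemma GF_empty {R : Type*} [CommRing R] (x : ℕ × ℕ → R) : GF x (∅ : Finset (ℕ × ℕ)) = 1 := by
  have h : sd (∅ : Finset (ℕ × ℕ)) = {∅} := by
    apply Finset.Subset.antisymm
    · intro T hT
      have := (mem_sd.1 hT).1
      simp only [Finset.subset_empty] at this
      simp [this]
    · intro T hT
      simp only [Finset.mem_singleton] at hT
      subst hT
      exact mem_sd.2 ⟨Finset.Subset.refl _, fun c hc => absurd hc (Finset.notMem_empty c)⟩
  rw [GF_def, h]
  simp

lemma fill_subset {Y : YoungDiagram} {d i j k : ℕ} {T : Finset (ℕ × ℕ)}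
    (hd : ∀ k : ℕ, (k, k) ∈ Y ↔ k < d) (hkd : k ≤ d)
    (hT : IsSubdiagram (SS Y i j) T)
    (hlow : ∀ l, max i j ≤ l → l < k → (l, l) ∈ T) :
    FF Y i j k ⊆ T := by
  intro s hs
  rw [mem_FF] at hs
  obtain ⟨hsY, h1, h2, h3, h4⟩ := hs
  have hl : (max (max s.1 s.2) (max i j), max (max s.1 s.2) (max i j)) ∈ T :=
    hlow _ (le_max_right _ _) (by omega)
  exact hT.2 _ hl s (mem_SS.2 ⟨hsY, h1, h3⟩) (by dsimp only; omega) (by dsimp only; omega)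

lemma noSE {Y : YoungDiagram} {i j k : ℕ} {T : Finset (ℕ × ℕ)}
    (hT : IsSubdiagram (SS Y i j) T) (hik : i ≤ k) (hjk : j ≤ k)
    (hknot : (k, k) ∉ T) : ∀ s ∈ T, s.1 < k ∨ s.2 < k := by
  intro s hsT
  by_contra h
  push_neg at h
  have hsS := mem_SS.1 (hT.1 hsT)
  have hkY : (k, k) ∈ Y := Y.up_left_mem h.1 h.2 (by simpa using hsS.1)
  exact hknot (hT.2 s hsT (k, k) (mem_SS.2 ⟨hkY, hik, hjk⟩) h.1 h.2)

/-- The diagonal crossing point of a subdiagram. -/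
def kap (m d : ℕ) (T : Finset (ℕ × ℕ)) : ℕ :=
  (insert d ((Finset.Icc m d).filter fun k => (k, k) ∉ T)).min' (Finset.insert_nonempty _ _)

lemma kap_spec {m d : ℕ} {T : Finset (ℕ × ℕ)} (hmd : m ≤ d) (hdT : (d, d) ∉ T) :
    (m ≤ kap m d T ∧ kap m d T ≤ d) ∧ ((kap m d T, kap m d T) ∉ T) ∧
      ∀ l, m ≤ l → l < kap m d T → (l, l) ∈ T := by
  have hmem := Finset.min'_mem (insert d ((Finset.Icc m d).filter fun k => (k, k) ∉ T))
    (Finset.insert_nonempty _ _)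
  rw [Finset.mem_insert] at hmem
  have hbase : (m ≤ kap m d T ∧ kap m d T ≤ d) ∧ ((kap m d T, kap m d T) ∉ T) := by
    rcases hmem with h | h
    · rw [kap, h]
      exact ⟨⟨hmd, le_refl d⟩, hdT⟩
    · rw [Finset.mem_filter, Finset.mem_Icc] at h
      exact ⟨h.1, h.2⟩
  refine ⟨hbase.1, hbase.2, fun l hml hlκ => ?_⟩
  by_contra hnot
  have hle : kap m d T ≤ l := Finset.min'_le _ _ (Finset.mem_insert_of_mem
    (Finset.mem_filter.2 ⟨Finset.mem_Icc.2 ⟨hml, by omega⟩, hnot⟩))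
  omega

lemma kap_eq {m d k : ℕ} {T : Finset (ℕ × ℕ)} (hmd : m ≤ d) (hdT : (d, d) ∉ T)
    (hmk : m ≤ k) (hkd : k ≤ d) (hknot : (k, k) ∉ T)
    (hlow : ∀ l, m ≤ l → l < k → (l, l) ∈ T) : kap m d T = k := by
  have hle : kap m d T ≤ k := Finset.min'_le _ _ (Finset.mem_insert_of_mem
    (Finset.mem_filter.2 ⟨Finset.mem_Icc.2 ⟨hmk, hkd⟩, hknot⟩))
  have hspec := kap_spec hmd hdT
  by_contra hne
  have hlt : kap m d T < k := by omega
  exact hspec.2.1 (hlow _ hspec.1.1 hlt)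

/-- The key combinatorial decomposition: `GF(λ(i,j)) = ∑_k GF(N_{ik}) z_k GF(W_{kj})`. -/
theorem GF_decomp {R : Type*} [CommRing R] (Y : YoungDiagram) (d : ℕ)
    (hd : ∀ k : ℕ, (k, k) ∈ Y ↔ k < d) (x : ℕ × ℕ → R) {i j : ℕ} (hi : i ≤ d) (hj : j ≤ d) :
    GF x (SS Y i j) =
      ∑ k ∈ Finset.Icc (max i j) d,
        GF x (NN Y i k) * ((∏ s ∈ SS Y k k, x s) * GF x (WW Y k j)) := by
  classical
  have hmd : max i j ≤ d := max_le hi hj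
  set m := max i j with hm
  have hdT : ∀ T : Finset (ℕ × ℕ), IsSubdiagram (SS Y i j) T → (d, d) ∉ T := by
    intro T hT h
    have h2 := (mem_SS.1 (hT.1 h)).1
    rw [hd d] at h2; omega
  have hR : (∑ k ∈ Finset.Icc m d,
      GF x (NN Y i k) * ((∏ s ∈ SS Y k k, x s) * GF x (WW Y k j)))
      = ∑ q ∈ (Finset.Icc m d).sigma (fun k => sd (NN Y i k) ×ˢ sd (WW Y k j)),
          (∏ s ∈ NN Y i q.1 \ q.2.1, x s) *
            ((∏ s ∈ SS Y q.1 q.1, x s) * (∏ s ∈ WW Y q.1 j \ q.2.2, x s)) := by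
    rw [Finset.sum_sigma]
    refine Finset.sum_congr rfl fun k _ => ?_
    rw [Finset.sum_product]
    simp only [GF_def, Finset.sum_mul, Finset.mul_sum]
    rw [Finset.sum_comm]
  rw [hR, GF_def]
  refine Finset.sum_nbij'
    (fun T => (⟨kap m d T, (T.filter fun s => kap m d T ≤ s.2,
        T.filter fun s => kap m d T ≤ s.1)⟩ : Σ _k : ℕ, Finset (ℕ × ℕ) × Finset (ℕ × ℕ)))
    (fun q : (Σ _k : ℕ, Finset (ℕ × ℕ) × Finset (ℕ × ℕ)) => FF Y i j q.1 ∪ q.2.1 ∪ q.2.2)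
    ?_ ?_ ?_ ?_ ?_
  · -- forward map lands in the sigma set
    intro T hT
    rw [mem_sd] at hT
    obtain ⟨⟨hκm, hκd⟩, hκnot, hκlow⟩ := kap_spec hmd (hdT T hT)
    set k := kap m d T with hk
    have hik : i ≤ k := le_trans (le_max_left i j) hκm
    have hjk : j ≤ k := le_trans (le_max_right i j) hκm
    have hno := noSE hT hik hjk hκnot
    rw [Finset.mem_sigma]
    refine ⟨Finset.mem_Icc.2 ⟨hκm, hκd⟩, ?_⟩
    rw [Finset.mem_product]
    constructor
    · rw [mem_sd]
      constructor
      · intro s hs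
        rw [Finset.mem_filter] at hs
        have hsS := mem_SS.1 (hT.1 hs.1)
        rcases hno s hs.1 with h | h
        · exact mem_NN.2 ⟨hsS.1, hsS.2.1, h, hs.2⟩
        · omega
      · intro c hc c' hc' h1 h2
        rw [Finset.mem_filter] at hc ⊢
        have hc'N := mem_NN.1 hc'
        exact ⟨hT.2 c hc.1 c' (mem_SS.2 ⟨hc'N.1, hc'N.2.1,
          le_trans hjk hc'N.2.2.2⟩) h1 h2, hc'N.2.2.2⟩
    · rw [mem_sd]
      constructor
      · intro s hs
        rw [Finset.mem_filter] at hs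
        have hsS := mem_SS.1 (hT.1 hs.1)
        rcases hno s hs.1 with h | h
        · omega
        · exact mem_WW.2 ⟨hsS.1, hs.2, hsS.2.2, h⟩
      · intro c hc c' hc' h1 h2
        rw [Finset.mem_filter] at hc ⊢
        have hc'W := mem_WW.1 hc'
        exact ⟨hT.2 c hc.1 c' (mem_SS.2 ⟨hc'W.1, le_trans hik hc'W.2.1,
          hc'W.2.2.1⟩) h1 h2, hc'W.2.1⟩
  · -- backward map lands in subdiagrams of SS
    intro q hq
    obtain ⟨k, TN, TW⟩ := q
    dsimp only at hq ⊢
    rw [Finset.mem_sigma, Finset.mem_product] at hq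
    dsimp only at hq
    have hk := hq.1
    have hTN := hq.2.1
    have hTW := hq.2.2
    rw [Finset.mem_Icc] at hk
    rw [mem_sd] at hTN hTW ⊢
    have hik : i ≤ k := le_trans (le_max_left i j) hk.1
    have hjk : j ≤ k := le_trans (le_max_right i j) hk.1
    constructor
    · intro s hs
      rcases Finset.mem_union.1 hs with hs | hs
      · rcases Finset.mem_union.1 hs with hs | hs
        · have h := mem_FF.1 hs
          exact mem_SS.2 ⟨h.1, h.2.1, h.2.2.2.1⟩
        · have h := mem_NN.1 (hTN.1 hs)
          exact mem_SS.2 ⟨h.1, h.2.1, le_trans hjk h.2.2.2⟩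
      · have h := mem_WW.1 (hTW.1 hs)
        exact mem_SS.2 ⟨h.1, le_trans hik h.2.1, h.2.2.1⟩
    · intro c hc c' hc' h1 h2
      have hc'S := mem_SS.1 hc'
      by_cases hv : k ≤ c'.2
      · have hcTN : c ∈ TN := by
          rcases Finset.mem_union.1 hc with hc0 | hc0
          · rcases Finset.mem_union.1 hc0 with hc1 | hc1
            · exact absurd (mem_FF.1 hc1).2.2.2.2 (by omega)
            · exact hc1
          · exact absurd (mem_WW.1 (hTW.1 hc0)).2.2.2 (by omega)
        have hcN := mem_NN.1 (hTN.1 hcTN)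
        have hc'N : c' ∈ NN Y i k := mem_NN.2 ⟨hc'S.1, hc'S.2.1, by omega, hv⟩
        exact Finset.mem_union.2 (Or.inl (Finset.mem_union.2
          (Or.inr (hTN.2 c hcTN c' hc'N h1 h2))))
      · by_cases hu : k ≤ c'.1
        · have hcTW : c ∈ TW := by
            rcases Finset.mem_union.1 hc with hc0 | hc0
            · rcases Finset.mem_union.1 hc0 with hc1 | hc1
              · exact absurd (mem_FF.1 hc1).2.2.1 (by omega)
              · exact absurd (mem_NN.1 (hTN.1 hc1)).2.2.1 (by omega)
            · exact hc0
          have hcW := mem_WW.1 (hTW.1 hcTW)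
          have hc'W : c' ∈ WW Y k j := mem_WW.2 ⟨hc'S.1, hu, hc'S.2.2, by omega⟩
          exact Finset.mem_union.2 (Or.inr (hTW.2 c hcTW c' hc'W h1 h2))
        · exact Finset.mem_union.2 (Or.inl (Finset.mem_union.2 (Or.inl
            (mem_FF.2 ⟨hc'S.1, hc'S.2.1, by omega, hc'S.2.2, by omega⟩))))
  · -- left inverse
    intro T hT
    dsimp only
    rw [mem_sd] at hT
    obtain ⟨⟨hκm, hκd⟩, hκnot, hκlow⟩ := kap_spec hmd (hdT T hT)
    apply Finset.Subset.antisymm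
    · refine Finset.union_subset (Finset.union_subset ?_ (Finset.filter_subset _ _))
        (Finset.filter_subset _ _)
      exact fill_subset hd hκd hT hκlow
    · intro s hs
      have hsS := mem_SS.1 (hT.1 hs)
      by_cases h2 : kap m d T ≤ s.2
      · exact Finset.mem_union.2 (Or.inl (Finset.mem_union.2
          (Or.inr (Finset.mem_filter.2 ⟨hs, h2⟩))))
      · by_cases h1 : kap m d T ≤ s.1
        · exact Finset.mem_union.2 (Or.inr (Finset.mem_filter.2 ⟨hs, h1⟩))
        · refine Finset.mem_union.2 (Or.inl (Finset.mem_union.2 (Or.inl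
            (mem_FF.2 ⟨hsS.1, hsS.2.1, by omega, hsS.2.2, by omega⟩))))
  · -- right inverse
    intro q hq
    obtain ⟨k, TN, TW⟩ := q
    dsimp only at hq ⊢
    rw [Finset.mem_sigma, Finset.mem_product] at hq
    dsimp only at hq
    have hk := hq.1
    have hTN := hq.2.1
    have hTW := hq.2.2
    rw [Finset.mem_Icc] at hk
    rw [mem_sd] at hTN hTW
    have hik : i ≤ k := le_trans (le_max_left i j) hk.1
    have hjk : j ≤ k := le_trans (le_max_right i j) hk.1
    have hTN_mem : ∀ s ∈ TN, s ∈ Y ∧ i ≤ s.1 ∧ s.1 < k ∧ k ≤ s.2 :=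
      fun s hs => mem_NN.1 (hTN.1 hs)
    have hTW_mem : ∀ s ∈ TW, s ∈ Y ∧ k ≤ s.1 ∧ j ≤ s.2 ∧ s.2 < k :=
      fun s hs => mem_WW.1 (hTW.1 hs)
    set T := FF Y i j k ∪ TN ∪ TW with hTdef
    have hknotT : (k, k) ∉ T := by
      intro h
      rcases Finset.mem_union.1 h with h0 | h0
      · rcases Finset.mem_union.1 h0 with h1 | h1
        · have := (mem_FF.1 h1).2.2.1; omega
        · have := (hTN_mem _ h1).2.2.1; omega
      · have := (hTW_mem _ h0).2.2.2; omega
    have hdTT : (d, d) ∉ T := by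
      intro h
      rcases Finset.mem_union.1 h with h0 | h0
      · rcases Finset.mem_union.1 h0 with h1 | h1
        · have := (mem_FF.1 h1).1; rw [hd d] at this; omega
        · have := (hTN_mem _ h1).1; rw [hd d] at this; omega
      · have := (hTW_mem _ h0).1; rw [hd d] at this; omega
    have hlow : ∀ l, m ≤ l → l < k → (l, l) ∈ T := by
      intro l hml hlk
      refine Finset.mem_union.2 (Or.inl (Finset.mem_union.2 (Or.inl (mem_FF.2
        ⟨(hd l).2 (by omega), ?_, hlk, ?_, hlk⟩))))
      · omega
      · omega
    have hκk : kap m d T = k := kap_eq hmd hdTT hk.1 hk.2 hknotT hlow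
    have hN : (T.filter fun s => kap m d T ≤ s.2) = TN := by
      rw [hκk]
      apply Finset.Subset.antisymm
      · intro s hs
        rw [Finset.mem_filter] at hs
        rcases Finset.mem_union.1 hs.1 with h0 | h0
        · rcases Finset.mem_union.1 h0 with h1 | h1
          · have := (mem_FF.1 h1).2.2.2.2; omega
          · exact h1
        · have := (hTW_mem _ h0).2.2.2; omega
      · intro s hs
        exact Finset.mem_filter.2 ⟨Finset.mem_union.2 (Or.inl (Finset.mem_union.2 (Or.inr hs))),
          (hTN_mem _ hs).2.2.2⟩
    have hW : (T.filter fun s => kap m d T ≤ s.1) = TW := by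
      rw [hκk]
      apply Finset.Subset.antisymm
      · intro s hs
        rw [Finset.mem_filter] at hs
        rcases Finset.mem_union.1 hs.1 with h0 | h0
        · rcases Finset.mem_union.1 h0 with h1 | h1
          · have := (mem_FF.1 h1).2.2.1; omega
          · have := (hTN_mem _ h1).2.2.1; omega
        · exact h0
      · intro s hs
        exact Finset.mem_filter.2 ⟨Finset.mem_union.2 (Or.inr hs), (hTW_mem _ hs).2.1⟩
    rw [hN, hW, hκk]
  · -- values agree
    intro T hT
    dsimp only
    rw [mem_sd] at hT
    obtain ⟨⟨hκm, hκd⟩, hκnot, hκlow⟩ := kap_spec hmd (hdT T hT)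
    set k := kap m d T with hk
    have hik : i ≤ k := le_trans (le_max_left i j) hκm
    have hjk : j ≤ k := le_trans (le_max_right i j) hκm
    have hno := noSE hT hik hjk hκnot
    have hfill := fill_subset hd hκd hT hκlow
    have hdisj2 : Disjoint (SS Y k k) (WW Y k j \ (T.filter fun s => k ≤ s.1)) := by
      rw [Finset.disjoint_left]
      intro s hs1 hs2
      have h1 := (mem_SS.1 hs1).2.2
      have h2 := (mem_WW.1 (Finset.mem_sdiff.1 hs2).1).2.2.2
      omega
    have hdisj1 : Disjoint (NN Y i k \ (T.filter fun s => k ≤ s.2))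
        (SS Y k k ∪ (WW Y k j \ (T.filter fun s => k ≤ s.1))) := by
      rw [Finset.disjoint_left]
      intro s hs1 hs2
      have h1 := (mem_NN.1 (Finset.mem_sdiff.1 hs1).1).2.2.1
      rcases Finset.mem_union.1 hs2 with h | h
      · have := (mem_SS.1 h).2.1; omega
      · have := (mem_WW.1 (Finset.mem_sdiff.1 h).1).2.1; omega
    have hseteq : SS Y i j \ T
        = (NN Y i k \ (T.filter fun s => k ≤ s.2))
          ∪ (SS Y k k ∪ (WW Y k j \ (T.filter fun s => k ≤ s.1))) := by
      ext s
      simp only [Finset.mem_sdiff, Finset.mem_union, mem_SS, mem_NN, mem_WW, Finset.mem_filter,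
        not_and]
      constructor
      · rintro ⟨⟨hY, hiu, hjv⟩, hnT⟩
        rcases le_or_gt k s.2 with hv | hv
        · rcases le_or_gt k s.1 with hu | hu
          · exact Or.inr (Or.inl ⟨hY, hu, hv⟩)
          · exact Or.inl ⟨⟨hY, hiu, hu, hv⟩, fun h _ => hnT h⟩
        · rcases le_or_gt k s.1 with hu | hu
          · exact Or.inr (Or.inr ⟨⟨hY, hu, hjv, hv⟩, fun h _ => hnT h⟩)
          · exact absurd (hfill (mem_FF.2 ⟨hY, hiu, hu, hjv, hv⟩)) hnT
      · rintro (⟨⟨hY, hiu, hu, hv⟩, hn⟩ | ⟨hY, hu, hv⟩ | ⟨⟨hY, hu, hjv, hv⟩, hn⟩)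
        · exact ⟨⟨hY, hiu, le_trans hjk hv⟩, fun hT' => hn hT' hv⟩
        · refine ⟨⟨hY, le_trans hik hu, le_trans hjk hv⟩, fun hT' => ?_⟩
          rcases hno _ hT' with h | h <;> omega
        · exact ⟨⟨hY, le_trans hik hu, hjv⟩, fun hT' => hn hT' hu⟩
    rw [← Finset.prod_union hdisj2, ← Finset.prod_union hdisj1, hseteq]


lemma NN_self_empty (Y : YoungDiagram) (i : ℕ) : NN Y i i = ∅ := by
  apply Finset.eq_empty_of_forall_notMem
  intro s hs
  have := mem_NN.1 hs
  omega

lemma WW_self_empty (Y : YoungDiagram) (k : ℕ) : WW Y k k = ∅ := by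
  apply Finset.eq_empty_of_forall_notMem
  intro s hs
  have := mem_WW.1 hs
  omega

/-- The matrix factorization `A = U * (D * L)`. -/
theorem matrix_eq {R : Type*} [CommRing R] (Y : YoungDiagram) (d : ℕ)
    (hd : ∀ k : ℕ, (k, k) ∈ Y ↔ k < d) (x : ℕ × ℕ → R) :
    (Matrix.of fun i j : Fin (d+1) => GF x (SS Y i j)) =
      (Matrix.of fun i k : Fin (d+1) => if (i : ℕ) ≤ (k : ℕ) then GF x (NN Y i k) else 0) *
      (Matrix.diagonal (fun k : Fin (d+1) => ∏ s ∈ SS Y (k : ℕ) (k : ℕ), x s) *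
       Matrix.of fun k j : Fin (d+1) => if (j : ℕ) ≤ (k : ℕ) then GF x (WW Y k j) else 0) := by
  ext i j
  rw [Matrix.mul_apply]
  simp only [Matrix.of_apply, Matrix.diagonal_mul]
  have key := GF_decomp Y d hd x (i.is_le) (j.is_le)
  calc (Matrix.of fun i j : Fin (d+1) => GF x (SS Y i j)) i j
      = GF x (SS Y i j) := rfl
    _ = ∑ k ∈ Finset.Icc (max (i : ℕ) (j : ℕ)) d,
          GF x (NN Y i k) * ((∏ s ∈ SS Y k k, x s) * GF x (WW Y k j)) := key
    _ = ∑ k ∈ Finset.Icc (max (i : ℕ) (j : ℕ)) d,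
          (if (i : ℕ) ≤ k then GF x (NN Y i k) else 0) *
            ((∏ s ∈ SS Y k k, x s) * (if (j : ℕ) ≤ k then GF x (WW Y k j) else 0)) := by
        refine Finset.sum_congr rfl fun k hk => ?_
        rw [Finset.mem_Icc] at hk
        rw [if_pos (le_trans (le_max_left _ _) hk.1), if_pos (le_trans (le_max_right _ _) hk.1)]
    _ = ∑ k ∈ Finset.range (d+1),
          (if (i : ℕ) ≤ k then GF x (NN Y i k) else 0) *
            ((∏ s ∈ SS Y k k, x s) * (if (j : ℕ) ≤ k then GF x (WW Y k j) else 0)) := by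
        refine Finset.sum_subset ?_ ?_
        · intro k hk
          rw [Finset.mem_Icc] at hk
          rw [Finset.mem_range]
          omega
        · intro k hk hk2
          rw [Finset.mem_range] at hk
          rw [Finset.mem_Icc] at hk2
          rcases le_or_gt (i : ℕ) k with h | h
          · rcases le_or_gt (j : ℕ) k with h2 | h2
            · exfalso; exact hk2 ⟨by omega, by omega⟩
            · rw [if_neg (show ¬ ((j : ℕ) ≤ k) from by omega), mul_zero, mul_zero]
          · rw [if_neg (show ¬ ((i : ℕ) ≤ k) from by omega), zero_mul]
    _ = ∑ k : Fin (d+1),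
          (if (i : ℕ) ≤ (k : ℕ) then GF x (NN Y i k) else 0) *
            ((∏ s ∈ SS Y (k : ℕ) (k : ℕ), x s) *
              (if (j : ℕ) ≤ (k : ℕ) then GF x (WW Y (k : ℕ) j) else 0)) :=
        (Fin.sum_univ_eq_sum_range (fun k => (if (i : ℕ) ≤ k then GF x (NN Y i k) else 0) *
          ((∏ s ∈ SS Y k k, x s) * (if (j : ℕ) ≤ k then GF x (WW Y k j) else 0))) (d+1)).symm

/-- Facts about the inverse of a triangular matrix with unit diagonal. -/
lemma tri_inv {n : ℕ} {R : Type*} [CommRing R] {α : Type*} [LinearOrder α]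
    (M : Matrix (Fin n) (Fin n) R) (b : Fin n → α) (hbinj : Function.Injective b)
    (hM : M.BlockTriangular b) (hMd : ∀ i, M i i = 1) (hdet : M.det = 1) :
    M⁻¹ * M = 1 ∧ M * M⁻¹ = 1 ∧ M⁻¹.BlockTriangular b ∧ (∀ i, M⁻¹ i i = 1) ∧ M⁻¹.det = 1 := by
  have hu : IsUnit M.det := by rw [hdet]; exact isUnit_one
  have h1 : M⁻¹ * M = 1 := Matrix.nonsing_inv_mul M hu
  have h2 : M * M⁻¹ = 1 := Matrix.mul_nonsing_inv M hu
  have h3 : M⁻¹.BlockTriangular b := by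
    haveI := M.invertibleOfIsUnitDet hu
    exact Matrix.blockTriangular_inv_of_blockTriangular hM
  have h5 : M⁻¹.det = 1 := by
    have hm := Matrix.det_mul M⁻¹ M
    rw [h1, Matrix.det_one, hdet, mul_one] at hm
    exact hm.symm
  refine ⟨h1, h2, h3, fun i => ?_, h5⟩
  have e1 : (M⁻¹ * M) i i = (1 : Matrix (Fin n) (Fin n) R) i i := by rw [h1]
  rw [Matrix.mul_apply, Matrix.one_apply_eq] at e1
  rw [Finset.sum_eq_single i ?side ?notmem] at e1
  case side =>
    intro k _ hk
    rcases lt_trichotomy (b k) (b i) with h | h | h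
    · rw [h3 h, zero_mul]
    · exact absurd (hbinj h) hk
    · rw [hM h, mul_zero]
  case notmem =>
    intro h; exact absurd (Finset.mem_univ i) h
  rw [hMd i, mul_one] at e1
  exact e1

end BS

/-- Bessenrodt–Stanley, Theorem 1. Cells of the Young diagram `Y` are
`0`-indexed, so the 1-indexed diagonal length `d` satisfies `(k,k) ∈ Y ↔ k < d`, and the
1-indexed `D_{kk} = ∏_{s ∈ λ(k,k)} x_s` becomes `Dd k = ∏_{s ∈ Y, k ≤ s.1, k ≤ s.2} x_s` for
`0`-indexed `k`. There are an upper unitriangular `P` and a lower unitriangular `Q` with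
`P * A(λ) * Q = diag(D_{11}, …, D_{d+1,d+1})`; in particular `A(λ)` has SSNF
`diag(1, D_{dd}, D_{d-1,d-1}, …, D_{11})` over `ℤ[x_s : s ∈ Y]`. -/
theorem youngDiagram_SSNF (Y : YoungDiagram) (d : ℕ) (hd : ∀ k : ℕ, (k, k) ∈ Y ↔ k < d) :
    let R := MvPolynomial {s : ℕ × ℕ // s ∈ Y} ℤ
    let x : ℕ × ℕ → R := fun s => if h : s ∈ Y then MvPolynomial.X ⟨s, h⟩ else 0
    let A : Matrix (Fin (d+1)) (Fin (d+1)) R := fun i j =>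
      GF x (Y.cells.filter fun s => (i : ℕ) ≤ s.1 ∧ (j : ℕ) ≤ s.2)
    let Dd : ℕ → R := fun k =>
      ∏ s ∈ Y.cells.filter (fun s => k ≤ s.1 ∧ k ≤ s.2), x s
    (∃ P Q : Matrix (Fin (d+1)) (Fin (d+1)) R,
      (∀ i, P i i = 1) ∧ (∀ i j : Fin (d+1), (j : ℕ) < (i : ℕ) → P i j = 0) ∧
      (∀ i, Q i i = 1) ∧ (∀ i j : Fin (d+1), (i : ℕ) < (j : ℕ) → Q i j = 0) ∧
      P * A * Q = Matrix.diagonal (fun k : Fin (d+1) => Dd (k : ℕ))) ∧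
    HasSSNF A (fun i : Fin (d+1) => Dd (d - (i : ℕ))) := by
  intro R x A Dd
  classical
  set U : Matrix (Fin (d+1)) (Fin (d+1)) R :=
    Matrix.of fun i k : Fin (d+1) => if (i : ℕ) ≤ (k : ℕ) then GF x (BS.NN Y i k) else 0 with hU
  set L : Matrix (Fin (d+1)) (Fin (d+1)) R :=
    Matrix.of fun k j : Fin (d+1) => if (j : ℕ) ≤ (k : ℕ) then GF x (BS.WW Y k j) else 0 with hL
  set DM : Matrix (Fin (d+1)) (Fin (d+1)) R :=
    Matrix.diagonal (fun k : Fin (d+1) => Dd (k : ℕ)) with hDM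
  have hA : A = U * (DM * L) := BS.matrix_eq Y d hd x
  have hUdiag : ∀ i, U i i = 1 := by
    intro i
    show (if (i : ℕ) ≤ (i : ℕ) then GF x (BS.NN Y i i) else 0) = 1
    rw [if_pos (le_refl _), BS.NN_self_empty, BS.GF_empty]
  have hUtri : U.BlockTriangular id := by
    intro p q h
    have hpq : (q : ℕ) < (p : ℕ) := h
    show (if (p : ℕ) ≤ (q : ℕ) then GF x (BS.NN Y p q) else 0) = 0
    rw [if_neg (by omega)]
  have hUdet : U.det = 1 := by
    rw [Matrix.det_of_upperTriangular hUtri]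
    exact Finset.prod_eq_one fun i _ => hUdiag i
  have hLdiag : ∀ i, L i i = 1 := by
    intro i
    show (if (i : ℕ) ≤ (i : ℕ) then GF x (BS.WW Y i i) else 0) = 1
    rw [if_pos (le_refl _), BS.WW_self_empty, BS.GF_empty]
  have hLtri : L.BlockTriangular (OrderDual.toDual : Fin (d+1) → (Fin (d+1))ᵒᵈ) := by
    intro p q h
    have hpq : (p : ℕ) < (q : ℕ) := (OrderDual.toDual_lt_toDual.mp h : p < q)
    show (if (q : ℕ) ≤ (p : ℕ) then GF x (BS.WW Y p q) else 0) = 0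
    rw [if_neg (by omega)]
  have hLdet : L.det = 1 := by
    rw [Matrix.det_of_lowerTriangular L hLtri]
    exact Finset.prod_eq_one fun i _ => hLdiag i
  obtain ⟨hPU, hUP, hPtri, hPdiag, hPdet⟩ :=
    BS.tri_inv U id Function.injective_id hUtri hUdiag hUdet
  obtain ⟨hQL, hLQ, hQtri, hQdiag, hQdet⟩ :=
    BS.tri_inv L (OrderDual.toDual : Fin (d+1) → (Fin (d+1))ᵒᵈ)
      (fun a b hab => OrderDual.toDual_inj.mp hab) hLtri hLdiag hLdet
  have hPAQ : U⁻¹ * A * L⁻¹ = DM := by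
    rw [hA]
    rw [show U⁻¹ * (U * (DM * L)) * L⁻¹ = (U⁻¹ * U) * DM * (L * L⁻¹) by
      simp only [Matrix.mul_assoc]]
    rw [hPU, hLQ, Matrix.one_mul, Matrix.mul_one]
  constructor
  · exact ⟨U⁻¹, L⁻¹, hPdiag, fun i j h => hPtri (show (j : ℕ) < (i : ℕ) from h),
      hQdiag, fun i j h => hQtri (show (i : ℕ) < (j : ℕ) from h), hPAQ⟩
  constructor
  · -- existence part of HasSSNF
    set σ : Equiv.Perm (Fin (d+1)) := Fin.revPerm with hσ
    set sg : R := ((Equiv.Perm.sign σ : ℤ) : R) with hsg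
    have hss : sg * sg = 1 := by
      rw [hsg, ← Int.cast_mul, ← Units.val_mul, Int.units_mul_self, Units.val_one, Int.cast_one]
    set e : Fin (d+1) → R := fun p => if p = 0 then sg else 1 with he
    have hee : ∀ p, e p * e p = 1 := by
      intro p
      by_cases h : p = 0
      · rw [he]; simp only [h, if_pos rfl]; exact hss
      · rw [he]; simp only [if_neg h]; rw [mul_one]
    have hprodE : (∏ p, e p) = sg := by
      calc (∏ p, e p) = e 0 :=
            Finset.prod_eq_single 0 (fun b _ hb => by rw [he]; simp [hb]) (by simp)
        _ = sg := by rw [he]; simp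
    refine ⟨Matrix.diagonal e * (U⁻¹).submatrix σ id,
      (L⁻¹).submatrix id σ * Matrix.diagonal e, ?_, ?_, ?_⟩
    · rw [Matrix.det_mul, Matrix.det_diagonal, hprodE, Matrix.det_permute, hPdet, mul_one]
      exact hss
    · rw [Matrix.det_mul, Matrix.det_diagonal, hprodE, Matrix.det_permute', hQdet, mul_one]
      exact hss
    · have hmid : (U⁻¹).submatrix σ id * A * (L⁻¹).submatrix id σ
          = (U⁻¹ * A * L⁻¹).submatrix σ σ := by
        have h1 : (U⁻¹).submatrix σ id * A = (U⁻¹ * A).submatrix σ id := by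
          have h := Matrix.submatrix_mul_equiv U⁻¹ A σ (Equiv.refl (Fin (d+1))) id
          simpa using h
        have h2 : (U⁻¹ * A).submatrix σ id * (L⁻¹).submatrix id σ
            = (U⁻¹ * A * L⁻¹).submatrix σ σ := by
          have h := Matrix.submatrix_mul_equiv (U⁻¹ * A) L⁻¹ σ (Equiv.refl (Fin (d+1))) σ
          simpa using h
        rw [h1, h2]
      rw [show Matrix.diagonal e * (U⁻¹).submatrix σ id * A * ((L⁻¹).submatrix id σ * Matrix.diagonal e)
          = Matrix.diagonal e * ((U⁻¹).submatrix σ id * A * (L⁻¹).submatrix id σ) * Matrix.diagonal e by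
        simp only [Matrix.mul_assoc]]
      rw [hmid, hPAQ, hDM, Matrix.submatrix_diagonal _ _ σ.injective,
        Matrix.diagonal_mul_diagonal, Matrix.diagonal_mul_diagonal]
      refine congrArg Matrix.diagonal (funext fun p => ?_)
      have hσp : ((σ p : Fin (d+1)) : ℕ) = d - (p : ℕ) := by
        rw [hσ]
        show ((Fin.rev p : Fin (d+1)) : ℕ) = d - (p : ℕ)
        rw [Fin.val_rev]
        omega
      calc e p * ((fun k : Fin (d+1) => Dd (k : ℕ)) ∘ σ) p * e p
          = (e p * e p) * Dd ((σ p : Fin (d+1)) : ℕ) := by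
            simp only [Function.comp_apply]; ring
        _ = Dd (d - (p : ℕ)) := by rw [hee p, one_mul, hσp]
  · intro p q hle
    show Dd (d - (q : ℕ)) ∣ Dd (d - (p : ℕ))
    have hsub : (Y.cells.filter fun s => (d - (q : ℕ)) ≤ s.1 ∧ (d - (q : ℕ)) ≤ s.2)
        ⊆ (Y.cells.filter fun s => (d - (p : ℕ)) ≤ s.1 ∧ (d - (p : ℕ)) ≤ s.2) := by
      intro s hs
      rw [Finset.mem_filter] at hs ⊢
      have hqp : (q : ℕ) ≤ (p : ℕ) := hle
      exact ⟨hs.1, by omega, by omega⟩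
    exact Finset.prod_dvd_prod_of_subset _ _ x hsub
end

section
/- Fix n ≥ 0. Let R = ℤ[b_0^{±1}, b_1^{±1}, …, λ_1, λ_2, …] be the Laurent polynomial ring over ℤ in the indeterminates b_i (i ≥ 0), with further polynomial indeterminates λ_i (i ≥ 1), and let μ_m ∈ R (m ∈ ℤ) be the Schröder-path moments of (b, λ). Then the (n+1)×(n+1) Toeplitz matrix (μ_{i−j})_{0≤i,j≤n} has SSNF diag(1, −λ_1/b_1, λ_1λ_2/(b_1b_2), …, (−1)^n λ_1λ_2⋯λ_n/(b_1b_2⋯b_n)) over R. -/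
/-- The finite set of lattice paths of `t` steps (each step `+1`, `0` or `-1`) from height `0`
to height `0` staying at or above the `x`-axis, recorded by their height sequences. -/
def motzkinPaths (t : ℕ) : Finset (Fin (t+1) → ℕ) :=
  (Fintype.piFinset fun _ : Fin (t+1) => Finset.range (t+1)).filter
    (fun ω => ω 0 = 0 ∧ ω (Fin.last t) = 0 ∧
      ∀ i : Fin t, ω i.succ ≤ ω i.castSucc + 1 ∧ ω i.castSucc ≤ ω i.succ + 1)

/-- The `n`-th (positive) Schröder moment: a Schröder path of size `n` is such a path with
(number of level steps) + (number of up steps) = `n` (level steps have length 1, up and down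
steps length 1/2); the weight of a level step at height `k` is `binv k = b_k⁻¹` and of a down
step from height `k` is `lam k * binv (k-1) * binv k`. -/
def schroderMomentPos {R : Type*} [CommRing R] (binv lam : ℕ → R) (n : ℕ) : R :=
  ∑ t ∈ Finset.range (2 * n + 1),
    ∑ ω ∈ (motzkinPaths t).filter (fun ω =>
        (Finset.univ.filter (fun i : Fin t => ω i.succ = ω i.castSucc)).card +
        (Finset.univ.filter (fun i : Fin t => ω i.succ = ω i.castSucc + 1)).card = n),
      ∏ i : Fin t,
        if ω i.succ = ω i.castSucc then binv (ω i.castSucc)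
        else if ω i.succ + 1 = ω i.castSucc then
          lam (ω i.castSucc) * binv (ω i.castSucc - 1) * binv (ω i.castSucc)
        else 1

/-- The `(-n)`-th Schröder moment (`n ≥ 1`): the sum is over Schröder paths of size `n` whose
first step is a level (east) step, a level step at height `k` now weighing `b k` and a down
step from height `k` weighing `lam k`. -/
def schroderMomentNeg {R : Type*} [CommRing R] (b lam : ℕ → R) (n : ℕ) : R :=
  ∑ t ∈ Finset.range (2 * n + 1),
    ∑ ω ∈ (motzkinPaths t).filter (fun ω =>
        ((Finset.univ.filter (fun i : Fin t => ω i.succ = ω i.castSucc)).card +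
         (Finset.univ.filter (fun i : Fin t => ω i.succ = ω i.castSucc + 1)).card = n) ∧
        0 < t ∧ ∀ i : Fin (t+1), (i : ℕ) = 1 → ω i = 0),
      ∏ i : Fin t,
        if ω i.succ = ω i.castSucc then b (ω i.castSucc)
        else if ω i.succ + 1 = ω i.castSucc then lam (ω i.castSucc)
        else 1

/-- The Schröder-path moments `μ_m` for `m : ℤ`. -/
def schroderMoment {R : Type*} [CommRing R] (b binv lam : ℕ → R) (m : ℤ) : R :=
  if 0 ≤ m then schroderMomentPos binv lam m.toNat else schroderMomentNeg b lam (-m).toNat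

/-!
Let `G s h` be the weighted count of Schröder paths of size `s` from height `0` to height `h`,
with level weights `b_k⁻¹` and down weights `δ_k = λ_k b_{k-1}⁻¹ b_k⁻¹`, and `G'` the same count
with weights `b_k` and `λ_k`. Removing the last step gives
`G (s+1) h = b_h⁻¹ G s h + G s (h-1) + δ_{h+1} G (s+1) (h+1)`, i.e. the rows `g_s = (G s h)_h`
satisfy `g_{s+1} Z = g_s Y`, where `Y` has `b⁻¹` on the diagonal and `1` above it and `Z` has `1`
on the diagonal and `-δ` below it. With `d_k` the claimed diagonal entries, the columns
`c_j = (d_k (G' j k - λ_{k+1} G' j (k+1)))_k` satisfy `c_j = Y e_j` and `c_{j+1} = Z e_j` for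
`e_j = (b_k d_k G' j k)_k`. Hence `g_{i+1} ⬝ c_{j+1} = g_i ⬝ c_j`, so `(g_i ⬝ c_j)` is Toeplitz;
its first column is `G i 0 = μ_i` and its first row is `b_0 G' (j-1) 0 = μ_{-j}` (the paths
counted by `μ_{-j}` start with a level step at height `0`). Since `G i k` vanishes for `i < k`
and is `1` for `i = k`, this writes `(μ_{i-j})` as a lower unitriangular matrix times `diag d`
times an upper unitriangular one.
-/

namespace Schroder

open Finset Matrix

section Paths

def motzkinPathsTo (t h : ℕ) : Finset (Fin (t+1) → ℕ) :=
  (Fintype.piFinset fun _ : Fin (t+1) => Finset.range (t+1)).filter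
    (fun ω => ω 0 = 0 ∧ ω (Fin.last t) = h ∧
      ∀ i : Fin t, ω i.succ ≤ ω i.castSucc + 1 ∧ ω i.castSucc ≤ ω i.succ + 1)

theorem apply_le_val_of_succ_le {t : ℕ} {ω : Fin (t+1) → ℕ} (h0 : ω 0 = 0)
    (hup : ∀ i : Fin t, ω i.succ ≤ ω i.castSucc + 1) (i : Fin (t+1)) : ω i ≤ i := by
  induction i using Fin.induction with
  | zero => simp [h0]
  | succ j ih => have := hup j; simp only [Fin.val_succ, Fin.val_castSucc] at *; omega

theorem mem_motzkinPathsTo {t h : ℕ} {ω : Fin (t+1) → ℕ} :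
    ω ∈ motzkinPathsTo t h ↔ ω 0 = 0 ∧ ω (Fin.last t) = h ∧
      ∀ i : Fin t, ω i.succ ≤ ω i.castSucc + 1 ∧ ω i.castSucc ≤ ω i.succ + 1 := by
  refine ⟨fun hω => (mem_filter.1 hω).2, fun hω => mem_filter.2 ⟨?_, hω⟩⟩
  simp only [Fintype.mem_piFinset, mem_range]
  exact fun i => (apply_le_val_of_succ_le hω.1 (fun j => (hω.2.2 j).1) i).trans_lt i.isLt

-- For `h = 0` the truncated `h - 1` still gives the right range `{0, 1}` of penultimate heights.
theorem sum_motzkinPathsTo_succ {M : Type*} [AddCommMonoid M] (t h : ℕ)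
    (F : (Fin (t+2) → ℕ) → M) :
    ∑ ω ∈ motzkinPathsTo (t+1) h, F ω =
      ∑ p ∈ Icc (h-1) (h+1), ∑ ω ∈ motzkinPathsTo t p, F (Fin.snoc ω h) := by
  rw [sum_sigma']
  refine sum_nbij' (fun ω => ⟨ω (Fin.last t).castSucc, Fin.init ω⟩) (fun x => Fin.snoc x.2 h)
    ?_ ?_ ?_ ?_ ?_
  · intro ω hω
    obtain ⟨h0, hh, hstep⟩ := mem_motzkinPathsTo.1 hω
    have hlast := hstep (Fin.last t)
    rw [Fin.succ_last, hh] at hlast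
    simp only [mem_sigma, mem_Icc, mem_motzkinPathsTo, Fin.init, Fin.castSucc_zero, true_and, h0]
    refine ⟨by omega, fun i => ?_⟩
    simpa [← Fin.castSucc_succ] using hstep i.castSucc
  · rintro ⟨p, ω⟩ hω
    obtain ⟨hp, h0, hl, hstep⟩ := by
      simpa only [mem_sigma, mem_Icc, mem_motzkinPathsTo] using hω
    simp only [mem_motzkinPathsTo, Fin.snoc_last, true_and]
    refine ⟨by rw [← Fin.castSucc_zero, Fin.snoc_castSucc, h0], fun i => ?_⟩
    induction i using Fin.lastCases with
    | last => rw [Fin.succ_last, Fin.snoc_last, Fin.snoc_castSucc, hl]; omega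
    | cast j => simpa [← Fin.castSucc_succ] using hstep j
  · intro ω hω
    simpa [(mem_motzkinPathsTo.1 hω).2.1] using Fin.snoc_init_self ω
  · rintro ⟨p, ω⟩ hω
    simpa using (mem_motzkinPathsTo.1 (mem_sigma.1 hω).2).2.1
  · intro ω hω
    rw [← (mem_motzkinPathsTo.1 hω).2.1, Fin.snoc_init_self]

theorem sum_motzkinPathsTo_succ_filter_eq_sum_cons {M : Type*} [AddCommMonoid M] (t h : ℕ)
    (F : (Fin (t+2) → ℕ) → M) :
    ∑ ω ∈ motzkinPathsTo (t+1) h with ω 1 = 0, F ω =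
      ∑ ω ∈ motzkinPathsTo t h, F (Fin.cons 0 ω) := by
  refine sum_nbij' Fin.tail (fun ω => Fin.cons 0 ω) ?_ ?_ ?_ ?_ ?_
  · intro ω hω
    obtain ⟨hω, h1⟩ := mem_filter.1 hω
    obtain ⟨-, hh, hstep⟩ := mem_motzkinPathsTo.1 hω
    refine mem_motzkinPathsTo.2
      ⟨h1, by simpa [Fin.tail, ← Fin.succ_last] using hh, fun i => ?_⟩
    simpa [Fin.tail, ← Fin.succ_castSucc] using hstep i.succ
  · intro ω hω
    obtain ⟨h0, hh, hstep⟩ := mem_motzkinPathsTo.1 hω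
    refine mem_filter.2
      ⟨mem_motzkinPathsTo.2 ⟨rfl, by simpa [← Fin.succ_last] using hh, fun i => ?_⟩, ?_⟩
    · induction i using Fin.cases with
      | zero => simp [h0]
      | succ j => simpa [← Fin.succ_castSucc] using hstep j
    · simpa using h0
  · intro ω hω
    rw [← (mem_motzkinPathsTo.1 (mem_filter.1 hω).1).1, Fin.cons_self_tail]
  · intro ω _
    exact Fin.tail_cons _ _
  · intro ω hω
    rw [← (mem_motzkinPathsTo.1 (mem_filter.1 hω).1).1, Fin.cons_self_tail]

def stepSize (p q : ℕ) : ℕ := (if q = p then 1 else 0) + (if q = p + 1 then 1 else 0)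

def pathSize {t : ℕ} (ω : Fin (t+1) → ℕ) : ℕ :=
  ∑ i : Fin t, stepSize (ω i.castSucc) (ω i.succ)

theorem stepSize_le_one (p q : ℕ) : stepSize p q ≤ 1 := by
  unfold stepSize; split_ifs <;> omega

theorem card_level_add_card_up {t : ℕ} (ω : Fin (t+1) → ℕ) :
    #{i : Fin t | ω i.succ = ω i.castSucc} + #{i : Fin t | ω i.succ = ω i.castSucc + 1} =
      pathSize ω := by
  simp only [card_filter, pathSize, stepSize, sum_add_distrib]

theorem pathSize_snoc {t : ℕ} (ω : Fin (t+1) → ℕ) (h : ℕ) :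
    pathSize (Fin.snoc ω h : Fin (t+2) → ℕ) = pathSize ω + stepSize (ω (Fin.last t)) h := by
  simp [pathSize, Fin.sum_univ_castSucc, ← Fin.castSucc_succ]

theorem pathSize_cons {t : ℕ} (a : ℕ) (ω : Fin (t+1) → ℕ) :
    pathSize (Fin.cons a ω : Fin (t+2) → ℕ) = stepSize a (ω 0) + pathSize ω := by
  simp [pathSize, Fin.sum_univ_succ]

theorem pathSize_le {t : ℕ} (ω : Fin (t+1) → ℕ) : pathSize ω ≤ t := by
  calc pathSize ω ≤ ∑ _i : Fin t, 1 := sum_le_sum fun i _ => stepSize_le_one _ _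
    _ = t := by simp

theorem add_le_two_mul_pathSize {t h : ℕ} {ω : Fin (t+1) → ℕ}
    (hω : ω ∈ motzkinPathsTo t h) : t + h ≤ 2 * pathSize ω := by
  obtain ⟨h0, hh, hstep⟩ := mem_motzkinPathsTo.1 hω
  -- summed over the steps, the heights telescope to `ω (Fin.last t) - ω 0 = h`
  have hsteps : ∑ i : Fin t, (1 + ω i.succ) ≤
      ∑ i : Fin t, (2 * stepSize (ω i.castSucc) (ω i.succ) + ω i.castSucc) := by
    refine sum_le_sum fun i _ => ?_
    have := hstep i
    unfold stepSize
    split_ifs <;> omega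
  have h1 := Fin.sum_univ_succ ω
  have h2 := Fin.sum_univ_castSucc ω
  simp only [sum_add_distrib, ← mul_sum, sum_const, card_univ, Fintype.card_fin, smul_eq_mul,
    mul_one] at hsteps
  unfold pathSize
  omega

end Paths

section Weights

variable {R : Type*} [CommSemiring R] (lev dwn : ℕ → R)

def stepWeight (p q : ℕ) : R := if q = p then lev p else if q + 1 = p then dwn p else 1

def pathWeight {t : ℕ} (ω : Fin (t+1) → ℕ) : R :=
  ∏ i : Fin t, stepWeight lev dwn (ω i.castSucc) (ω i.succ)

theorem pathWeight_snoc {t : ℕ} (ω : Fin (t+1) → ℕ) (h : ℕ) :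
    pathWeight lev dwn (Fin.snoc ω h : Fin (t+2) → ℕ) =
      pathWeight lev dwn ω * stepWeight lev dwn (ω (Fin.last t)) h := by
  simp [pathWeight, Fin.prod_univ_castSucc, ← Fin.castSucc_succ]

theorem pathWeight_cons {t : ℕ} (a : ℕ) (ω : Fin (t+1) → ℕ) :
    pathWeight lev dwn (Fin.cons a ω : Fin (t+2) → ℕ) =
      stepWeight lev dwn a (ω 0) * pathWeight lev dwn ω := by
  simp [pathWeight, Fin.prod_univ_succ]

def pathSum (t s h : ℕ) : R :=
  ∑ ω ∈ motzkinPathsTo t h with pathSize ω = s, pathWeight lev dwn ω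

theorem sum_motzkinPathsTo_snoc_filter (t s p h : ℕ) :
    ∑ ω ∈ motzkinPathsTo t p with pathSize (Fin.snoc ω h : Fin (t+2) → ℕ) = s + 1,
      pathWeight lev dwn (Fin.snoc ω h : Fin (t+2) → ℕ) =
    stepWeight lev dwn p h * pathSum lev dwn t (s + 1 - stepSize p h) p := by
  rw [pathSum, sum_filter, sum_filter, mul_sum]
  refine sum_congr rfl fun ω hω => ?_
  have := stepSize_le_one p h
  rw [pathSize_snoc, pathWeight_snoc, (mem_motzkinPathsTo.1 hω).2.1]
  split_ifs <;> first | omega | ring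

theorem pathSum_succ_succ (t s h : ℕ) :
    pathSum lev dwn (t+1) (s+1) h =
      lev h * pathSum lev dwn t s h + (if h = 0 then 0 else pathSum lev dwn t s (h-1)) +
        dwn (h+1) * pathSum lev dwn t (s+1) (h+1) := by
  rw [pathSum, sum_filter, sum_motzkinPathsTo_succ]
  simp_rw [← sum_filter, sum_motzkinPathsTo_snoc_filter]
  rcases h with _ | h
  · rw [show Icc (0 - 1) (0 + 1) = {0, 1} by rfl, sum_pair (by simp)]
    simp [stepWeight, stepSize]
  · rw [show Icc (h + 1 - 1) (h + 1 + 1) = {h + 1, h, h + 2} by ext; simp; omega,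
      sum_insert (by simp), sum_pair (by simp)]
    simp only [stepWeight, stepSize, show h + 2 ≠ h by omega, Nat.add_left_cancel_iff,
      Nat.add_right_cancel_iff, Nat.left_eq_add, Nat.add_eq_left, Nat.add_eq_zero_iff, one_ne_zero,
      OfNat.one_ne_ofNat, OfNat.ofNat_ne_zero, and_false, ↓reduceIte, add_zero, zero_add, one_mul,
      add_tsub_cancel_right, tsub_zero]
    ring

theorem pathSum_eq_zero {t s h : ℕ} (hs : 2 * s < t + h ∨ t < s) :
    pathSum lev dwn t s h = 0 := by
  refine sum_eq_zero fun ω hω => absurd hs ?_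
  obtain ⟨hω, hsize⟩ := mem_filter.1 hω
  have := add_le_two_mul_pathSize hω
  have := pathSize_le ω
  omega

theorem pathSum_zero_zero_zero : pathSum lev dwn 0 0 0 = 1 := by
  have : {ω ∈ motzkinPathsTo 0 0 | pathSize ω = 0} = {0} := by
    ext ω
    simp [mem_motzkinPathsTo, pathSize, funext_iff, Fin.forall_fin_one]
  simp [pathSum, this, pathWeight]

theorem sum_level_first_eq_mul_pathSum (t m : ℕ) :
    ∑ ω ∈ motzkinPathsTo (t+1) 0 with
        pathSize ω = m + 1 ∧ ∀ i : Fin (t+2), (i : ℕ) = 1 → ω i = 0, pathWeight lev dwn ω =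
      lev 0 * pathSum lev dwn t m 0 := by
  have hpred : ∀ ω : Fin (t+2) → ℕ, (pathSize ω = m + 1 ∧
      ∀ i : Fin (t+2), (i : ℕ) = 1 → ω i = 0) ↔ (ω 1 = 0 ∧ pathSize ω = m + 1) := by
    refine fun ω => ⟨fun ⟨hs, h1⟩ => ⟨h1 1 (by simp), hs⟩, fun ⟨h1, hs⟩ => ⟨hs, fun i hi => ?_⟩⟩
    rwa [show i = 1 from Fin.ext (by simpa using hi)]
  rw [filter_congr fun ω _ => hpred ω, ← filter_filter, sum_filter,
    sum_motzkinPathsTo_succ_filter_eq_sum_cons, pathSum, sum_filter, mul_sum]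
  refine sum_congr rfl fun ω hω => ?_
  rw [pathSize_cons, pathWeight_cons, (mem_motzkinPathsTo.1 hω).1]
  simp [stepSize, stepWeight, add_comm 1 (pathSize ω)]

def schroderSum (s h : ℕ) : R := ∑ t ∈ range (2 * s + 1), pathSum lev dwn t s h

theorem sum_range_pathSum {M s h : ℕ} (hM : 2 * s + 1 ≤ M + h) :
    ∑ t ∈ range M, pathSum lev dwn t s h = schroderSum lev dwn s h := by
  have hvan : ∀ t ≥ 2 * s + 1 - h, pathSum lev dwn t s h = 0 :=
    fun t ht => pathSum_eq_zero lev dwn (Or.inl (by omega))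
  rw [eventually_constant_sum hvan (n := M) (by omega), schroderSum,
    eventually_constant_sum hvan (n := 2 * s + 1) (by omega)]

theorem schroderSum_zero (h : ℕ) : schroderSum lev dwn 0 h = if h = 0 then 1 else 0 := by
  rw [schroderSum, sum_range_one]
  split_ifs with h0
  · rw [h0, pathSum_zero_zero_zero]
  · exact pathSum_eq_zero lev dwn (Or.inl (by omega))

theorem schroderSum_succ (s h : ℕ) :
    schroderSum lev dwn (s+1) h =
      lev h * schroderSum lev dwn s h + (if h = 0 then 0 else schroderSum lev dwn s (h-1)) +
        dwn (h+1) * schroderSum lev dwn (s+1) (h+1) := by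
  have hshift : schroderSum lev dwn (s+1) h =
      ∑ t ∈ range (2 * s + 2), pathSum lev dwn (t+1) (s+1) h := by
    rw [schroderSum, show 2 * (s + 1) + 1 = 2 * s + 2 + 1 by ring, sum_range_succ',
      pathSum_eq_zero lev dwn (Or.inr (by omega)), add_zero]
  simp_rw [hshift, pathSum_succ_succ, sum_add_distrib, ← mul_sum]
  rw [sum_range_pathSum lev dwn (by omega), sum_range_pathSum lev dwn (by omega)]
  split_ifs
  · simp
  · rw [sum_range_pathSum lev dwn (by omega)]

theorem schroderSum_eq_zero_of_lt {s h : ℕ} (hs : s < h) : schroderSum lev dwn s h = 0 :=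
  sum_eq_zero fun t _ => pathSum_eq_zero lev dwn (by omega)

theorem schroderSum_self (s : ℕ) : schroderSum lev dwn s s = 1 := by
  induction s with
  | zero => simp [schroderSum_zero]
  | succ s ih =>
    rw [schroderSum_succ, schroderSum_eq_zero_of_lt lev dwn (lt_add_one s),
      schroderSum_eq_zero_of_lt lev dwn (by omega : s + 1 < s + 1 + 1)]
    simp [ih]

end Weights

section Moments

variable {R : Type*} [CommRing R]

def downWeight (binv lam : ℕ → R) (k : ℕ) : R := lam k * binv (k - 1) * binv k

theorem schroderMomentPos_eq_schroderSum (binv lam : ℕ → R) (n : ℕ) :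
    schroderMomentPos binv lam n = schroderSum binv (downWeight binv lam) n 0 := by
  simp only [schroderMomentPos, schroderSum, pathSum, card_level_add_card_up]
  rfl

theorem schroderMomentNeg_succ_eq_schroderSum (b lam : ℕ → R) (m : ℕ) :
    schroderMomentNeg b lam (m + 1) = b 0 * schroderSum b lam m 0 := by
  rw [schroderMomentNeg]
  simp only [card_level_add_card_up]
  change ∑ t ∈ range (2 * (m + 1) + 1), ∑ ω ∈ motzkinPathsTo t 0 with
      pathSize ω = m + 1 ∧ 0 < t ∧ ∀ i : Fin (t+1), (i : ℕ) = 1 → ω i = 0,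
      pathWeight b lam ω = _
  rw [show 2 * (m + 1) + 1 = 2 * m + 2 + 1 by ring, sum_range_succ']
  simp only [Nat.lt_irrefl, Nat.succ_pos, false_and, and_false, true_and, filter_false,
    sum_empty, add_zero]
  simp_rw [sum_level_first_eq_mul_pathSum, ← mul_sum,
    sum_range_pathSum b lam (by omega : 2 * m + 1 ≤ 2 * m + 2 + 0)]

theorem schroderMoment_natCast_sub (b binv lam : ℕ → R) (i j : ℕ) :
    schroderMoment b binv lam ((i : ℤ) - j) =
      if j ≤ i then schroderMomentPos binv lam (i - j) else schroderMomentNeg b lam (j - i) := by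
  unfold schroderMoment
  split_ifs <;> first | omega | congr 1; omega

end Moments

section Bidiagonal

variable {R : Type*} [CommRing R] {N : ℕ}

variable (N) in
def upperBidiag (a : ℕ → R) : Matrix (Fin N) (Fin N) R :=
  of fun i j => (if (j : ℕ) = i then a i else 0) + (if (j : ℕ) = i + 1 then 1 else 0)

variable (N) in
def lowerBidiag (c : ℕ → R) : Matrix (Fin N) (Fin N) R :=
  of fun i j => (if (j : ℕ) = i then 1 else 0) - (if (j : ℕ) + 1 = i then c i else 0)

theorem sum_fin_ite_val_eq (c : ℕ) (g : ℕ → R) :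
    ∑ j : Fin N, (if (j : ℕ) = c then g j else 0) = if c < N then g c else 0 := by
  rw [Fin.sum_univ_eq_sum_range (fun j => if j = c then g j else 0), sum_ite_eq']
  simp

theorem sum_fin_ite_val_add_one_eq {c : ℕ} (hc : c ≤ N) (g : ℕ → R) :
    ∑ j : Fin N, (if (j : ℕ) + 1 = c then g j else 0) = if c = 0 then 0 else g (c - 1) := by
  rcases c with _ | c
  · simp
  · simpa using sum_fin_ite_val_eq c g |>.trans (if_pos (by omega))

theorem upperBidiag_mulVec (a f : ℕ → R) (hf : f N = 0) :
    upperBidiag N a *ᵥ (fun k : Fin N => f k) = fun i : Fin N => a i * f i + f (i + 1) := by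
  ext i
  simp only [mulVec, dotProduct, upperBidiag, of_apply, add_mul, ite_mul, one_mul, zero_mul,
    sum_add_distrib, sum_fin_ite_val_eq]
  rw [sum_fin_ite_val_eq _ (fun k => a i * f k), if_pos i.isLt]
  split_ifs with h
  · rfl
  · rw [show (i : ℕ) + 1 = N by omega, hf]

theorem lowerBidiag_mulVec (c f : ℕ → R) :
    lowerBidiag N c *ᵥ (fun k : Fin N => f k) =
      fun i : Fin N => f i - if (i : ℕ) = 0 then 0 else c i * f (i - 1) := by
  ext i
  simp only [mulVec, dotProduct, lowerBidiag, of_apply, sub_mul, ite_mul, one_mul, zero_mul,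
    sum_sub_distrib, sum_fin_ite_val_eq, sum_fin_ite_val_add_one_eq i.isLt.le (fun k => c i * f k)]
  rw [if_pos i.isLt]

theorem vecMul_upperBidiag (a f : ℕ → R) :
    (fun k : Fin N => f k) ᵥ* upperBidiag N a =
      fun j : Fin N => a j * f j + if (j : ℕ) = 0 then 0 else f (j - 1) := by
  ext j
  simp only [vecMul, dotProduct, upperBidiag, of_apply, mul_add, mul_ite, mul_one, mul_zero,
    sum_add_distrib, eq_comm (a := (j : ℕ)), sum_fin_ite_val_add_one_eq j.isLt.le]
  rw [sum_fin_ite_val_eq _ (fun k => f k * a k), if_pos j.isLt, mul_comm]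

theorem vecMul_lowerBidiag (c f : ℕ → R) (hf : f N = 0) :
    (fun k : Fin N => f k) ᵥ* lowerBidiag N c = fun j : Fin N => f j - c (j + 1) * f (j + 1) := by
  ext j
  simp only [vecMul, dotProduct, lowerBidiag, of_apply, mul_sub, mul_ite, mul_one, mul_zero,
    sum_sub_distrib, eq_comm (a := (j : ℕ)), eq_comm (a := (j : ℕ) + 1), sum_fin_ite_val_eq]
  rw [sum_fin_ite_val_eq _ (fun k => f k * c k), if_pos j.isLt]
  split_ifs with h
  · ring
  · rw [show (j : ℕ) + 1 = N by omega, hf, mul_zero, sub_zero]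

end Bidiagonal

section Factorization

variable {R : Type*} [CommRing R] {N : ℕ}

def ssnfEntry (binv lam : ℕ → R) (k : ℕ) : R :=
  (-1) ^ k * (∏ t ∈ Icc 1 k, lam t) * (∏ t ∈ Icc 1 k, binv t)

theorem ssnfEntry_zero (binv lam : ℕ → R) : ssnfEntry binv lam 0 = 1 := by
  simp [ssnfEntry]

theorem ssnfEntry_succ (binv lam : ℕ → R) (k : ℕ) :
    ssnfEntry binv lam (k + 1) = -(lam (k + 1) * binv (k + 1)) * ssnfEntry binv lam k := by
  simp only [ssnfEntry, prod_Icc_succ_top (by omega : 1 ≤ k + 1), pow_succ]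
  ring

theorem ssnfEntry_dvd (binv lam : ℕ → R) {i j : ℕ} (hji : j ≤ i) :
    ssnfEntry binv lam j ∣ ssnfEntry binv lam i := by
  induction i, hji using Nat.le_induction with
  | base => rfl
  | succ i _ ih => rw [ssnfEntry_succ]; exact ih.mul_left _

def rightCol (b lam : ℕ → R) (j k : ℕ) : R :=
  schroderSum b lam j k - lam (k + 1) * schroderSum b lam j (k + 1)

def pathRow (N : ℕ) (lev dwn : ℕ → R) (i : ℕ) : Fin N → R :=
  fun k => schroderSum lev dwn i k

theorem pathRow_succ_vecMul_lowerBidiag (lev dwn : ℕ → R) {m : ℕ} (hm : m + 1 < N) :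
    pathRow N lev dwn (m + 1) ᵥ* lowerBidiag N dwn =
      pathRow N lev dwn m ᵥ* upperBidiag N lev := by
  unfold pathRow
  rw [vecMul_lowerBidiag _ _ (schroderSum_eq_zero_of_lt lev dwn hm), vecMul_upperBidiag]
  ext k
  rw [schroderSum_succ]
  ring

theorem pathRow_zero_dotProduct (lev dwn : ℕ → R) (v : ℕ → R) (hN : 0 < N) :
    pathRow N lev dwn 0 ⬝ᵥ (fun k : Fin N => v k) = v 0 := by
  simp only [dotProduct, pathRow, schroderSum_zero, ite_mul, one_mul, zero_mul]
  rw [sum_fin_ite_val_eq 0 v, if_pos hN]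

theorem det_schroderSum_eq_one (lev dwn : ℕ → R) :
    (of fun i k : Fin N => schroderSum lev dwn i k).det = 1 := by
  rw [det_of_isLowerTriangular (of fun i k : Fin N => schroderSum lev dwn i k)
    fun i k hik => schroderSum_eq_zero_of_lt lev dwn (OrderDual.toDual_lt_toDual.mp hik)]
  simp [schroderSum_self]

variable {b binv lam : ℕ → R}

theorem rightCol_succ_zero (m : ℕ) : rightCol b lam (m + 1) 0 = b 0 * schroderSum b lam m 0 := by
  simp [rightCol, schroderSum_succ b lam m 0]

theorem pathRow_dotProduct_rightCol_zero (lev dwn : ℕ → R) (i : ℕ) (hN : 0 < N) :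
    pathRow N lev dwn i ⬝ᵥ (fun k : Fin N => ssnfEntry binv lam k * rightCol b lam 0 k) =
      schroderSum lev dwn i 0 := by
  simp only [dotProduct, pathRow, rightCol, schroderSum_zero, Nat.add_eq_zero_iff, one_ne_zero,
    and_false, ↓reduceIte, mul_zero, sub_zero, mul_ite, mul_one]
  rw [sum_fin_ite_val_eq 0 (fun k => schroderSum lev dwn i k * ssnfEntry binv lam k), if_pos hN,
    ssnfEntry_zero, mul_one]

theorem det_rightCol_eq_one : (of fun k j : Fin N => rightCol b lam j k).det = 1 := by
  rw [det_of_isUpperTriangular fun k j (hjk : j < k) => by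
    simp [rightCol, schroderSum_eq_zero_of_lt b lam hjk,
      schroderSum_eq_zero_of_lt b lam (Nat.lt_add_one_of_lt hjk)]]
  simp [rightCol, schroderSum_self, schroderSum_eq_zero_of_lt b lam (Nat.lt_add_one _)]

variable (hbb : ∀ t, b t * binv t = 1)
include hbb

theorem upperBidiag_mulVec_eq_rightCol {j : ℕ} (hj : j < N) :
    upperBidiag N binv *ᵥ (fun k : Fin N => b k * ssnfEntry binv lam k * schroderSum b lam j k) =
      fun k : Fin N => ssnfEntry binv lam k * rightCol b lam j k := by
  rw [upperBidiag_mulVec _ (fun k => b k * ssnfEntry binv lam k * schroderSum b lam j k)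
    (by rw [schroderSum_eq_zero_of_lt b lam hj, mul_zero])]
  ext k
  rw [rightCol, ssnfEntry_succ]
  linear_combination (ssnfEntry binv lam k * schroderSum b lam j k) * hbb k -
    lam (k + 1) * ssnfEntry binv lam k * schroderSum b lam j (k + 1) * hbb (k + 1)

theorem lowerBidiag_mulVec_eq_rightCol (j : ℕ) :
    lowerBidiag N (downWeight binv lam) *ᵥ
        (fun k : Fin N => b k * ssnfEntry binv lam k * schroderSum b lam j k) =
      fun k : Fin N => ssnfEntry binv lam k * rightCol b lam (j + 1) k := by
  rw [lowerBidiag_mulVec _ (fun k => b k * ssnfEntry binv lam k * schroderSum b lam j k)]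
  ext ⟨k, hk⟩
  simp only [rightCol]
  rcases k with _ | k
  · simp [schroderSum_succ b lam j 0, ssnfEntry_zero]
  · simp only [schroderSum_succ b lam j (k + 1), downWeight, ssnfEntry_succ,
      add_tsub_cancel_right, Nat.add_one_ne_zero, if_false]
    linear_combination
      -(lam (k + 1) * binv (k + 1) * ssnfEntry binv lam k * schroderSum b lam j k) * hbb k

theorem pathRow_dotProduct_succ_succ {i j : ℕ} (hi : i + 1 < N) (hj : j + 1 < N) :
    pathRow N binv (downWeight binv lam) (i + 1) ⬝ᵥ
        (fun k : Fin N => ssnfEntry binv lam k * rightCol b lam (j + 1) k) =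
      pathRow N binv (downWeight binv lam) i ⬝ᵥ
        (fun k : Fin N => ssnfEntry binv lam k * rightCol b lam j k) := by
  rw [← lowerBidiag_mulVec_eq_rightCol hbb, dotProduct_mulVec,
    pathRow_succ_vecMul_lowerBidiag _ _ hi, ← dotProduct_mulVec,
    upperBidiag_mulVec_eq_rightCol hbb (by omega)]

theorem pathRow_dotProduct_rightCol {i j : ℕ} (hi : i < N) (hj : j < N) :
    pathRow N binv (downWeight binv lam) i ⬝ᵥ
        (fun k : Fin N => ssnfEntry binv lam k * rightCol b lam j k) =
      schroderMoment b binv lam ((i : ℤ) - j) := by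
  set F : ℕ → ℕ → R := fun i j => pathRow N binv (downWeight binv lam) i ⬝ᵥ
    (fun k : Fin N => ssnfEntry binv lam k * rightCol b lam j k) with hF
  have hshift : ∀ k i j, i + k < N → j + k < N → F (i + k) (j + k) = F i j := by
    intro k
    induction k with
    | zero => simp
    | succ k ih =>
      intro i j hi hj
      rw [← ih i j (by omega) (by omega)]
      exact pathRow_dotProduct_succ_succ hbb (by omega) (by omega)
  show F i j = _
  rw [schroderMoment_natCast_sub]
  split_ifs with hji
  · obtain ⟨d, rfl⟩ := Nat.exists_eq_add_of_le hji
    have hFd := hshift j d 0 (by omega) (by omega)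
    rw [zero_add, add_comm d] at hFd
    rw [add_tsub_cancel_left, schroderMomentPos_eq_schroderSum, hFd, hF]
    exact pathRow_dotProduct_rightCol_zero _ _ d (by omega)
  · obtain ⟨m, rfl⟩ : ∃ m, j = i + (m + 1) := ⟨j - i - 1, by omega⟩
    have hF0 := hshift i 0 (m + 1) (by omega) (by omega)
    rw [zero_add, add_comm (m + 1)] at hF0
    rw [show i + (m + 1) - i = m + 1 by omega, schroderMomentNeg_succ_eq_schroderSum,
      ← rightCol_succ_zero, hF0, hF]
    dsimp only
    rw [pathRow_zero_dotProduct _ _ (fun k => ssnfEntry binv lam k * rightCol b lam (m + 1) k)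
      (by omega), ssnfEntry_zero, one_mul]

theorem toeplitz_eq_mul_diagonal_mul :
    (fun i j : Fin N => schroderMoment b binv lam ((i : ℕ) - (j : ℕ) : ℤ)) =
      (of fun i k : Fin N => schroderSum binv (downWeight binv lam) i k) *
        diagonal (fun k : Fin N => ssnfEntry binv lam k) *
          of fun k j : Fin N => rightCol b lam j k := by
  ext i j
  rw [← pathRow_dotProduct_rightCol hbb i.isLt j.isLt, Matrix.mul_assoc, mul_apply]
  simp [dotProduct, pathRow, diagonal_mul]

theorem hasSSNF_schroderToeplitz :
    HasSSNF (fun i j : Fin N => schroderMoment b binv lam ((i : ℕ) - (j : ℕ) : ℤ))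
      (fun i => ssnfEntry binv lam i) := by
  set L : Matrix (Fin N) (Fin N) R := of fun i k => schroderSum binv (downWeight binv lam) i k
  set U : Matrix (Fin N) (Fin N) R := of fun k j => rightCol b lam j k
  have hL : L.det = 1 := det_schroderSum_eq_one _ _
  have hU : U.det = 1 := det_rightCol_eq_one
  refine ⟨⟨L⁻¹, U⁻¹, by simp [hL], by simp [hU], ?_⟩,
    fun i j hji => ssnfEntry_dvd binv lam hji⟩
  rw [toeplitz_eq_mul_diagonal_mul hbb, ← Matrix.mul_assoc, ← Matrix.mul_assoc,
    nonsing_inv_mul L (by rw [hL]; exact isUnit_one), Matrix.one_mul, Matrix.mul_assoc,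
    mul_nonsing_inv U (by rw [hU]; exact isUnit_one), Matrix.mul_one]

end Factorization

end Schroder

/-- Over the Laurent polynomial ring
`R = ℤ[b₀^{±1}, b₁^{±1}, …, λ₁, λ₂, …]`, realized as the monoid algebra of `ℕ →₀ ℤ`
(Laurent monomials in the `b`'s) over `ℤ[λ] = MvPolynomial ℕ+ ℤ`, the Toeplitz matrix
`(μ_{i-j})_{0≤i,j≤n}` has SSNF
`diag(1, -λ₁/b₁, λ₁λ₂/(b₁b₂), …, (-1)ⁿ λ₁⋯λ_n/(b₁⋯b_n))`. -/
theorem toeplitz_schroder_SSNF (n : ℕ) :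
    let R := AddMonoidAlgebra (MvPolynomial ℕ+ ℤ) (ℕ →₀ ℤ)
    let b : ℕ → R := fun i => AddMonoidAlgebra.single (Finsupp.single i (1 : ℤ)) 1
    let binv : ℕ → R := fun i => AddMonoidAlgebra.single (Finsupp.single i (-1 : ℤ)) 1
    let lam : ℕ → R := fun i =>
      AddMonoidAlgebra.single 0
        (if h : 0 < i then MvPolynomial.X (⟨i, h⟩ : ℕ+) else 0)
    HasSSNF (fun i j : Fin (n+1) => schroderMoment b binv lam ((i : ℕ) - (j : ℕ) : ℤ))
      (fun i => (-1) ^ (i : ℕ) * (∏ t ∈ Finset.Icc 1 (i : ℕ), lam t) *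
        (∏ t ∈ Finset.Icc 1 (i : ℕ), binv t)) := by
  intro R b binv lam
  refine Schroder.hasSSNF_schroderToeplitz fun t => ?_
  rw [AddMonoidAlgebra.single_mul_single, one_mul, ← Finsupp.single_add, add_neg_cancel,
    Finsupp.single_zero]
  rfl
end

section
/- Let L be a finite lattice with elements listed as x_1, …, x_n, let R be a commutative ring, and let f : L → R. Let ζ(x,y) = 1 if x ≤ y and ζ(x,y) = 0 otherwise, let Z = (ζ(x_i, x_j))_{1≤i,j≤n} over R, let μ be the Möbius function of L, and set g(x) = Σ_{y ≥ x} μ(x,y) f(y) ∈ R. Then: (a) the Gram matrix G = (f(x_i ∨ x_j))_{1≤i,j≤n} satisfies G = Z · diag(g(x_1), …, g(x_n)) · Z^T, and det Z = 1; (b) if the listing satisfies i ≤ j whenever x_i ≤ x_j (resp. whenever x_j ≤ x_i), then Z is upper (resp. lower) unitriangular. -/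
/-!
Möbius inversion along the order gives `f x = ∑_{z ≥ x} g z`. Since `z ≥ x ⊔ y` exactly when
`z ≥ x` and `z ≥ y`, this makes `f (x ⊔ y) = ∑_z ζ(x,z) g(z) ζ(y,z)`, the `(x, y)` entry of
`Z * diagonal g * Zᵀ`. Listing `L` along a linear extension of its order makes `Z` upper
unitriangular, hence `det Z = 1`; any listing is a simultaneous permutation of rows and columns
of that one, which does not change the determinant.
-/

open scoped Classical

open Matrix

noncomputable section

section ZetaMatrix

variable (P : Type*) [PartialOrder P] (R : Type*)

def zetaMatrix [Zero R] [One R] : Matrix P P R :=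
  of fun x y => if x ≤ y then 1 else 0

variable {P R}

def incidenceMatrix [Zero R] (a : P → P → R) : Matrix P P R :=
  of fun x y => if x ≤ y then a x y else 0

lemma zetaMatrix_apply_self [Zero R] [One R] (x : P) : zetaMatrix P R x x = 1 :=
  if_pos le_rfl

lemma zetaMatrix_apply_of_not_le [Zero R] [One R] {x y : P} (h : ¬ x ≤ y) :
    zetaMatrix P R x y = 0 :=
  if_neg h

lemma blockTriangular_zetaMatrix_submatrix [Zero R] [One R] {ι α : Type*} [Preorder α]
    {e : ι → P} {b : ι → α} (h : ∀ i j, e i ≤ e j → b i ≤ b j) :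
    ((zetaMatrix P R).submatrix e e).BlockTriangular b :=
  fun i j hji => zetaMatrix_apply_of_not_le fun hij => (h i j hij).not_gt hji

variable [Fintype P]

lemma det_zetaMatrix [CommRing R] : (zetaMatrix P R).det = 1 := by
  let _ : Fintype (LinearExtension P) := ‹Fintype P›
  let e : LinearExtension P ≃ P := Equiv.refl P
  have hU : ((zetaMatrix P R).submatrix e e).IsUpperTriangular :=
    blockTriangular_zetaMatrix_submatrix fun _ _ h => toLinearExtension.monotone (α := P) h
  rw [← det_submatrix_equiv_self e, det_of_isUpperTriangular hU]
  exact Finset.prod_eq_one fun x _ => zetaMatrix_apply_self (e x)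

lemma zetaMatrix_mul_incidenceMatrix_eq_one [CommRing R] {a : P → P → R}
    (ha : ∀ x y, (∑ z, if x ≤ z ∧ z ≤ y then a x z else 0) = if x = y then 1 else 0) :
    zetaMatrix P R * incidenceMatrix a = 1 := by
  refine mul_eq_one_comm.mp (ext fun x y => ?_)
  rw [mul_apply, one_apply, ← ha x y]
  refine Finset.sum_congr rfl fun z _ => ?_
  simp only [incidenceMatrix, zetaMatrix, of_apply, ite_and]
  split_ifs <;> simp

lemma zetaMatrix_mulVec_incidenceMatrix_mulVec [CommRing R] {a : P → P → R}
    (ha : ∀ x y, (∑ z, if x ≤ z ∧ z ≤ y then a x z else 0) = if x = y then 1 else 0)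
    (f : P → R) :
    zetaMatrix P R *ᵥ (incidenceMatrix a *ᵥ f) = f := by
  rw [mulVec_mulVec, zetaMatrix_mul_incidenceMatrix_eq_one ha, one_mulVec]

end ZetaMatrix

lemma zetaMatrix_mul_diagonal_mul_transpose {P R : Type*} [SemilatticeSup P] [Fintype P]
    [NonAssocSemiring R] (g : P → R) :
    zetaMatrix P R * diagonal g * (zetaMatrix P R)ᵀ =
      of fun x y => (zetaMatrix P R *ᵥ g) (x ⊔ y) := by
  ext x y
  rw [mul_apply, of_apply, mulVec, dotProduct]
  refine Finset.sum_congr rfl fun z _ => ?_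
  rw [mul_diagonal, transpose_apply]
  simp only [zetaMatrix, of_apply, sup_le_iff, ite_and]
  split_ifs <;> simp

end

theorem lattice_gram_factorization_general
    {L : Type*} [Lattice L] [Fintype L] {N : ℕ} (e : Fin N ≃ L)
    {R : Type*} [CommRing R] (f : L → R)
    (mu : L → L → ℤ)
    (hmu1 : ∀ x y : L, (∑ z : L, if x ≤ z ∧ z ≤ y then mu x z else 0)
      = if x = y then 1 else 0) :
    let g : L → R := fun x => ∑ y : L, if x ≤ y then (mu x y : ℤ) • f y else 0
    let Z : Matrix (Fin N) (Fin N) R := fun i j => if e i ≤ e j then 1 else 0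
    let G : Matrix (Fin N) (Fin N) R := fun i j => f (e i ⊔ e j)
    (G = Z * Matrix.diagonal (fun i => g (e i)) * Z.transpose ∧ Z.det = 1) ∧
    ((∀ i j : Fin N, e i ≤ e j → i ≤ j) →
      (∀ i, Z i i = 1) ∧ (∀ i j : Fin N, j < i → Z i j = 0)) ∧
    ((∀ i j : Fin N, e i ≤ e j → j ≤ i) →
      (∀ i, Z i i = 1) ∧ (∀ i j : Fin N, i < j → Z i j = 0)) := by
  intro g Z G
  have hZ : Z = (zetaMatrix L R).submatrix e e := rfl
  have hmu : ∀ x y : L, (∑ z, if x ≤ z ∧ z ≤ y then (mu x z : R) else 0) =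
      if x = y then 1 else 0 := fun x y => by
    exact_mod_cast congrArg (Int.cast : ℤ → R) (hmu1 x y)
  have hg : g = incidenceMatrix (fun x y => (mu x y : R)) *ᵥ f := by
    ext x
    simp only [g, incidenceMatrix, mulVec, dotProduct, of_apply, ite_mul, zero_mul, zsmul_eq_mul]
  have hG : G = (zetaMatrix L R * diagonal g * (zetaMatrix L R)ᵀ).submatrix e e := by
    rw [zetaMatrix_mul_diagonal_mul_transpose, hg, zetaMatrix_mulVec_incidenceMatrix_mulVec hmu]
    rfl
  refine ⟨⟨?_, ?_⟩, fun h => ⟨?_, ?_⟩, fun h => ⟨?_, ?_⟩⟩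
  · rw [hG, hZ, ← submatrix_mul_equiv _ _ _ e, ← submatrix_mul_equiv _ _ _ e,
      submatrix_diagonal_equiv, transpose_submatrix]
    rfl
  · rw [hZ, det_submatrix_equiv_self, det_zetaMatrix]
  · exact fun i => zetaMatrix_apply_self (e i)
  · exact fun i j hji => blockTriangular_zetaMatrix_submatrix (b := id) h hji
  · exact fun i => zetaMatrix_apply_self (e i)
  · exact fun i j hij => blockTriangular_zetaMatrix_submatrix (b := OrderDual.toDual) h hij

/-- Let `L` be a finite lattice listed as `e 0, …, e (N-1)`, `R` a
commutative ring, `f : L → R`, `mu` the (integer-valued) Möbius function of `L`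
(characterized by the two hypotheses `hmu0`, `hmu1`), and `g x = ∑_{y ≥ x} mu x y • f y`.
Then (a) the Gram matrix `G = (f (x_i ⊔ x_j))` equals `Z * diag(g ∘ e) * Zᵀ` and
`det Z = 1`; (b) if the listing is such that `i ≤ j` whenever `e i ≤ e j`
(resp. whenever `e j ≤ e i`), then `Z` is upper (resp. lower) unitriangular. -/
theorem lattice_gram_factorization
    {L : Type*} [Lattice L] [Fintype L] {N : ℕ} (e : Fin N ≃ L)
    {R : Type*} [CommRing R] (f : L → R)
    (mu : L → L → ℤ)
    (hmu0 : ∀ x y : L, ¬ x ≤ y → mu x y = 0)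
    (hmu1 : ∀ x y : L, (∑ z : L, if x ≤ z ∧ z ≤ y then mu x z else 0)
      = if x = y then 1 else 0) :
    let g : L → R := fun x => ∑ y : L, if x ≤ y then (mu x y : ℤ) • f y else 0
    let Z : Matrix (Fin N) (Fin N) R := fun i j => if e i ≤ e j then 1 else 0
    let G : Matrix (Fin N) (Fin N) R := fun i j => f (e i ⊔ e j)
    (G = Z * Matrix.diagonal (fun i => g (e i)) * Z.transpose ∧ Z.det = 1) ∧
    ((∀ i j : Fin N, e i ≤ e j → i ≤ j) →
      (∀ i, Z i i = 1) ∧ (∀ i j : Fin N, j < i → Z i j = 0)) ∧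
    ((∀ i j : Fin N, e i ≤ e j → j ≤ i) →
      (∀ i, Z i i = 1) ∧ (∀ i j : Fin N, i < j → Z i j = 0)) :=
  lattice_gram_factorization_general e f mu hmu1
end

section
/- Let L be a finite lattice with top element ⊤, listed as x_1, …, x_N, let rk : L → ℕ satisfy rk(x) ≤ rk(⊤) =: l for all x ∈ L, and work over ℤ[q]. Let μ be the Möbius function of L, set χ(x) = Σ_{y ≥ x} μ(x,y) q^{l − rk(y)} ∈ ℤ[q], let G = (q^{l − rk(x_i ∨ x_j)})_{1≤i,j≤N}, and let Z = (ζ(x_i,x_j))_{1≤i,j≤N}. Then: (a) G = Z · diag(χ(x_1), …, χ(x_N)) · Z^T. (b) Suppose χ(x) depends only on rk(x); for 0 ≤ k ≤ l let L_k = {x ∈ L : rk(x) = l − k} and let χ_k(q) denote the common value of χ on L_k, and suppose χ_i(q) is a multiple of χ_j(q) in ℤ[q] whenever i > j. Then G has SSNF over ℤ[q] equal to the N×N diagonal matrix whose diagonal entries are, in order, χ_0(q) repeated |L_0| times, χ_1(q) repeated |L_1| times, …, χ_l(q) repeated |L_l| times (terms with L_k = ∅ omitted). -/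
open scoped Classical

/-- Let `L` be a finite lattice with top element, listed as
`e 0, …, e (N-1)`, let `rk : L → ℕ` with `rk x ≤ rk ⊤ =: l`, let `mu` be the Möbius function
of `L` (characterized by `hmu0`, `hmu1`), and set `χ(x) = ∑_{y ≥ x} mu x y • q^{l - rk y}`.
Then (a) `G = Z * diag(χ ∘ e) * Zᵀ`; (b) if `χ` depends only on the rank — say
`χ(x) = χk (l - rk x)` for a family `χk` — and `χk i` is a multiple of `χk j` whenever
`j < i ≤ l`, then `G` has SSNF the diagonal matrix whose entries, listed along a
rank-decreasing enumeration `π` of `L`, are `χk 0` repeated `|L_0|` times, then `χk 1`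
repeated `|L_1|` times, …, then `χk l` repeated `|L_l|` times. -/
theorem lattice_rank_gram_SSNF
    {L : Type*} [Lattice L] [OrderTop L] [Fintype L] {N : ℕ} (e : Fin N ≃ L)
    (rk : L → ℕ) (hrk : ∀ x : L, rk x ≤ rk (⊤ : L))
    (mu : L → L → ℤ)
    (hmu0 : ∀ x y : L, ¬ x ≤ y → mu x y = 0)
    (hmu1 : ∀ x y : L, (∑ z : L, if x ≤ z ∧ z ≤ y then mu x z else 0)
      = if x = y then 1 else 0) :
    let l : ℕ := rk (⊤ : L)
    let χ : L → Polynomial ℤ := fun x =>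
      ∑ y : L, if x ≤ y then (mu x y : ℤ) • Polynomial.X ^ (l - rk y) else 0
    let Z : Matrix (Fin N) (Fin N) (Polynomial ℤ) := fun i j => if e i ≤ e j then 1 else 0
    let G : Matrix (Fin N) (Fin N) (Polynomial ℤ) := fun i j =>
      Polynomial.X ^ (l - rk (e i ⊔ e j))
    (G = Z * Matrix.diagonal (fun i => χ (e i)) * Z.transpose) ∧
    (∀ χk : ℕ → Polynomial ℤ,
      (∀ x : L, χ x = χk (l - rk x)) →
      (∀ i j : ℕ, j < i → i ≤ l → χk j ∣ χk i) →
      ∃ π : Fin N ≃ L, (∀ i j : Fin N, i ≤ j → rk (π j) ≤ rk (π i)) ∧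
        HasSSNF G (fun i => χk (l - rk (π i)))) := by
  intro l χ Z G
  have hχdef : ∀ x : L,
      χ x = ∑ y : L, if x ≤ y then (mu x y : ℤ) • Polynomial.X ^ (l - rk y) else 0 :=
    fun _ => rfl
  have hZdef : ∀ i j, Z i j = if e i ≤ e j then 1 else 0 := fun _ _ => rfl
  -- integer zeta and Möbius matrices
  set A : Matrix (Fin N) (Fin N) ℤ := Matrix.of fun i j => if e i ≤ e j then (1 : ℤ) else 0
    with hA
  set B : Matrix (Fin N) (Fin N) ℤ := Matrix.of fun i j => mu (e i) (e j) with hB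
  have hBA : B * A = 1 := by
    ext i j
    rw [Matrix.mul_apply]
    have h1 : ∀ k : Fin N, B i k * A k j
        = if e i ≤ e k ∧ e k ≤ e j then mu (e i) (e k) else 0 := by
      intro k
      by_cases h2 : e k ≤ e j
      · by_cases h3 : e i ≤ e k
        · simp [hA, hB, h2, h3]
        · simp [hA, hB, h2, h3, hmu0 _ _ h3]
      · simp [hA, hB, h2]
    rw [Finset.sum_congr rfl fun k _ => h1 k,
      Equiv.sum_comp e (fun z => if e i ≤ z ∧ z ≤ e j then mu (e i) z else 0),
      hmu1 (e i) (e j)]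
    simp [Matrix.one_apply]
  have hAB : A * B = 1 := mul_eq_one_comm.mpr hBA
  have key : ∀ m y : L, (∑ x : L, if m ≤ x then mu x y else 0) = if m = y then 1 else 0 := by
    intro m y
    have h := congrFun (congrFun hAB (e.symm m)) (e.symm y)
    rw [Matrix.mul_apply] at h
    have h1 : ∀ k : Fin N, A (e.symm m) k * B k (e.symm y)
        = if m ≤ e k then mu (e k) y else 0 := by
      intro k
      by_cases h2 : m ≤ e k
      · simp [hA, hB, e.apply_symm_apply, h2]
      · simp [hA, hB, e.apply_symm_apply, h2]
    rw [Finset.sum_congr rfl fun k _ => h1 k,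
      Equiv.sum_comp e (fun x => if m ≤ x then mu x y else 0)] at h
    rw [h]
    simp [Matrix.one_apply]
  have main : ∀ m : L, (∑ x : L, if m ≤ x then χ x else 0) = Polynomial.X ^ (l - rk m) := by
    intro m
    have h1 : ∀ x : L, (if m ≤ x then χ x else 0)
        = ∑ y : L, (if m ≤ x ∧ x ≤ y then (mu x y : ℤ) else 0) •
            ((Polynomial.X : Polynomial ℤ) ^ (l - rk y)) := by
      intro x
      by_cases h2 : m ≤ x
      · rw [if_pos h2, hχdef]
        refine Finset.sum_congr rfl fun y _ => ?_
        by_cases h3 : x ≤ y <;> simp [h2, h3]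
      · rw [if_neg h2]
        symm
        refine Finset.sum_eq_zero fun y _ => ?_
        simp [h2]
    rw [Finset.sum_congr rfl fun x _ => h1 x, Finset.sum_comm]
    have h4 : ∀ y : L,
        (∑ x : L, (if m ≤ x ∧ x ≤ y then (mu x y : ℤ) else 0) •
            ((Polynomial.X : Polynomial ℤ) ^ (l - rk y)))
        = (if m = y then (1 : ℤ) else 0) • ((Polynomial.X : Polynomial ℤ) ^ (l - rk y)) := by
      intro y
      rw [← Finset.sum_smul]
      congr 1
      rw [← key m y]
      refine Finset.sum_congr rfl fun x _ => ?_
      by_cases h2 : m ≤ x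
      · by_cases h3 : x ≤ y
        · simp [h2, h3]
        · simp [h2, h3, hmu0 _ _ h3]
      · simp [h2]
    rw [Finset.sum_congr rfl fun y _ => h4 y]
    simp only [ite_smul, one_smul, zero_smul, Finset.sum_ite_eq, Finset.mem_univ, if_true]
  have hGa : G = Z * Matrix.diagonal (fun i => χ (e i)) * Z.transpose := by
    ext i j
    rw [Matrix.mul_apply]
    have h1 : ∀ k, (Z * Matrix.diagonal fun i => χ (e i)) i k * Z.transpose k j
        = if e i ⊔ e j ≤ e k then χ (e k) else 0 := by
      intro k
      rw [Matrix.mul_diagonal, Matrix.transpose_apply, hZdef, hZdef]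
      by_cases h2 : e i ≤ e k <;> by_cases h3 : e j ≤ e k <;>
        simp [h2, h3, sup_le_iff]
    rw [Finset.sum_congr rfl fun k _ => h1 k,
      Equiv.sum_comp e (fun x => if e i ⊔ e j ≤ x then χ x else 0), main]
  refine ⟨hGa, ?_⟩
  intro χk hχk hdvd
  rcases Nat.eq_zero_or_pos N with hN | hN
  · subst hN
    refine ⟨e, fun i _ _ => Fin.elim0 i, ⟨⟨1, 1, Matrix.det_one, Matrix.det_one, ?_⟩,
      fun i => Fin.elim0 i⟩⟩
    ext i j
    exact Fin.elim0 i
  · -- main case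
    set f : Fin N → ℕ := fun i => l - rk (e i) with hf
    set σ : Equiv.Perm (Fin N) := Tuple.sort f with hσ
    have hmono : Monotone (f ∘ σ) := Tuple.monotone_sort f
    refine ⟨σ.trans e, ?_, ?_⟩
    · intro i j hij
      have h1 := hmono hij
      have h2 : rk (e (σ i)) ≤ l := hrk _
      have h3 : rk (e (σ j)) ≤ l := hrk _
      simp only [Function.comp, hf, Equiv.trans_apply] at h1 ⊢
      omega
    constructor
    · -- the matrices
      set D : Matrix (Fin N) (Fin N) (Polynomial ℤ) := Matrix.diagonal (fun i => χ (e i))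
        with hD
      -- Z is invertible with det square 1
      have hcast : (Int.castRingHom (Polynomial ℤ)).mapMatrix A = Z := by
        ext i j
        simp only [RingHom.mapMatrix_apply, Matrix.map_apply, hA, Matrix.of_apply, hZdef]
        split <;> simp
      have hZB : Z * (Int.castRingHom (Polynomial ℤ)).mapMatrix B = 1 := by
        have h := congrArg ((Int.castRingHom (Polynomial ℤ)).mapMatrix) hAB
        rwa [map_mul, map_one, hcast] at h
      have hdetZ : IsUnit Z.det := Matrix.isUnit_det_of_right_inverse hZB
      have hdetZT : IsUnit Z.transpose.det := by rwa [Matrix.det_transpose]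
      have hZZ : Z.det * Z.det = 1 := by
        have hAu : IsUnit A.det := Matrix.isUnit_det_of_right_inverse hAB
        have hAA : A.det * A.det = 1 := Int.isUnit_mul_self hAu
        have hZd : Z.det = ((A.det : ℤ) : Polynomial ℤ) := by
          rw [← hcast, ← RingHom.map_det]
          rfl
        rw [hZd, ← Int.cast_mul, hAA, Int.cast_one]
      -- sign of σ as a polynomial
      set s : Polynomial ℤ := ((Equiv.Perm.sign σ : ℤ) : Polynomial ℤ) with hs
      have hss : s * s = 1 := by
        have h1 : ((Equiv.Perm.sign σ : ℤ)) * ((Equiv.Perm.sign σ : ℤ)) = 1 :=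
          Int.isUnit_mul_self (Equiv.Perm.sign σ).isUnit
        rw [hs, ← Int.cast_mul, h1, Int.cast_one]
      -- permutation matrix
      set S : Matrix (Fin N) (Fin N) (Polynomial ℤ) := Equiv.Perm.permMatrix (Polynomial ℤ) σ
        with hS
      have hSapp : ∀ i j, S i j = if σ i = j then 1 else 0 := by
        intro i j
        by_cases h : σ i = j <;>
          simp [hS, Equiv.Perm.permMatrix, PEquiv.toMatrix_apply, Equiv.toPEquiv_apply,
            Option.mem_def, h]
      have hSdet : S.det = s := Matrix.det_permutation σ
      have hSDS : S * D * S.transpose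
          = Matrix.diagonal (fun i => χk (l - rk ((σ.trans e) i))) := by
        ext i j
        rw [Matrix.mul_apply]
        have h1 : ∀ k, (S * D) i k * S.transpose k j
            = if σ i = k then (if σ j = k then χ (e k) else 0) else 0 := by
          intro k
          rw [hD, Matrix.mul_diagonal, Matrix.transpose_apply, hSapp, hSapp]
          by_cases h2 : σ i = k <;> by_cases h3 : σ j = k <;> simp [h2, h3]
        rw [Finset.sum_congr rfl fun k _ => h1 k, Finset.sum_ite_eq]
        simp only [Finset.mem_univ, if_true, Matrix.diagonal_apply, Equiv.trans_apply]
        by_cases h : i = j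
        · subst h
          simp [hχk (e (σ i))]
        · have h2 : ¬ σ j = σ i := fun hc => h (σ.injective hc).symm
          simp [h, h2]
      -- the sign-fixing matrix E
      set i0 : Fin N := ⟨0, hN⟩ with hi0
      set ε : Polynomial ℤ := Z.det * s with hε
      set g : Fin N → Polynomial ℤ := fun i => if i = i0 then ε else 1 with hg
      set E : Matrix (Fin N) (Fin N) (Polynomial ℤ) := Matrix.diagonal g with hE
      have hgg : ∀ i, g i * g i = 1 := by
        intro i
        simp only [hg]
        by_cases h : i = i0
        · rw [if_pos h, hε]
          calc Z.det * s * (Z.det * s) = (Z.det * Z.det) * (s * s) := by ring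
          _ = 1 := by rw [hZZ, hss, one_mul]
        · rw [if_neg h, one_mul]
      have hEdet : E.det = ε := by
        rw [hE, Matrix.det_diagonal, hg]
        rw [Finset.prod_ite_eq' Finset.univ i0 (fun _ => ε)]
        simp
      have hEDE : ∀ d : Fin N → Polynomial ℤ,
          E * Matrix.diagonal d * E = Matrix.diagonal d := by
        intro d
        rw [hE, Matrix.diagonal_mul_diagonal, Matrix.diagonal_mul_diagonal]
        have h1 : (fun i => g i * d i * g i) = d := by
          funext i
          calc g i * d i * g i = g i * g i * d i := by ring
          _ = d i := by rw [hgg, one_mul]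
        rw [h1]
      -- determinant of Z⁻¹
      have hdZinv : Z⁻¹.det = Z.det := by
        have h1 : Z⁻¹.det * Z.det = 1 := by
          rw [← Matrix.det_mul, Matrix.nonsing_inv_mul Z hdetZ, Matrix.det_one]
        calc Z⁻¹.det = Z⁻¹.det * (Z.det * Z.det) := by rw [hZZ, mul_one]
        _ = (Z⁻¹.det * Z.det) * Z.det := by ring
        _ = Z.det := by rw [h1, one_mul]
      have hdZTinv : Z.transpose⁻¹.det = Z.det := by
        have h1 : Z.transpose⁻¹.det * Z.det = 1 := by
          rw [← Matrix.det_transpose Z, ← Matrix.det_mul,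
            Matrix.nonsing_inv_mul Z.transpose hdetZT, Matrix.det_one]
        calc Z.transpose⁻¹.det = Z.transpose⁻¹.det * (Z.det * Z.det) := by rw [hZZ, mul_one]
        _ = (Z.transpose⁻¹.det * Z.det) * Z.det := by ring
        _ = Z.det := by rw [h1, one_mul]
      refine ⟨E * S * Z⁻¹, Z.transpose⁻¹ * S.transpose * E, ?_, ?_, ?_⟩
      · rw [Matrix.det_mul, Matrix.det_mul, hEdet, hSdet, hdZinv, hε]
        calc Z.det * s * s * Z.det = (Z.det * Z.det) * (s * s) := by ring
        _ = 1 := by rw [hZZ, hss, one_mul]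
      · rw [Matrix.det_mul, Matrix.det_mul, hEdet, Matrix.det_transpose, hSdet, hdZTinv, hε]
        calc Z.det * s * (Z.det * s) = (Z.det * Z.det) * (s * s) := by ring
        _ = 1 := by rw [hZZ, hss, one_mul]
      · rw [hGa]
        have step : E * S * Z⁻¹ * (Z * D * Z.transpose)
            * (Z.transpose⁻¹ * S.transpose * E)
            = E * (S * D * S.transpose) * E := by
          rw [show Z * D * Z.transpose = Z * (D * Z.transpose) from by rw [Matrix.mul_assoc]]
          rw [show E * S * Z⁻¹ * (Z * (D * Z.transpose)) = E * S * (Z⁻¹ * (Z * (D * Z.transpose)))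
            from by rw [Matrix.mul_assoc]]
          rw [Matrix.nonsing_inv_mul_cancel_left Z _ hdetZ]
          rw [show E * S * (D * Z.transpose) * (Z.transpose⁻¹ * S.transpose * E)
              = E * S * (D * (Z.transpose * (Z.transpose⁻¹ * (S.transpose * E))))
            from by simp only [Matrix.mul_assoc]]
          rw [Matrix.mul_nonsing_inv_cancel_left Z.transpose _ hdetZT]
          simp only [Matrix.mul_assoc]
        rw [step, hSDS, hEDE]
    · -- divisibility
      intro i j hji
      have h1 : f (σ j) ≤ f (σ i) := hmono hji
      simp only [Equiv.trans_apply]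
      rcases eq_or_lt_of_le h1 with h | h
      · rw [hf] at h
        simp only [hf] at h ⊢
        rw [h]
      · exact hdvd _ _ h (Nat.sub_le _ _)
end

section
/- Fix n ≥ 0 and work over R = ℤ[a,q]. For 0 ≤ i ≤ n let g_i(x) = Σ_{k=0}^i A_{ik} a^k x^k, where the A_{ik} ∈ R are arbitrary with A_{ii} = 1 for every i. Then the (n+1)×(n+1) matrix (g_i([j]_q))_{0≤i,j≤n}, whose (i,j) entry is g_i evaluated at [j]_q ∈ R, has SSNF diag(1, a q^{binom(1,2)} [1]!_q, a² q^{binom(2,2)} [2]!_q, …, a^n q^{binom(n,2)} [n]!_q) over R, where binom(m,2) = m(m−1)/2. In particular, the Vandermonde matrix ((1 + a[j]_q)^i)_{0≤i,j≤n} has this SSNF over ℤ[a,q], and the Vandermonde matrix (([j+1]_q)^i)_{0≤i,j≤n} has SSNF diag(1, q^{binom(2,2)}[1]!_q, q^{binom(3,2)}[2]!_q, …, q^{binom(n+1,2)}[n]!_q) over ℤ[q]. -/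
-- We work in `ℤ[a,q] = MvPolynomial (Fin 2) ℤ`, with `a = X 0` and `q = X 1`.
namespace Stmt19

noncomputable abbrev a : MvPolynomial (Fin 2) ℤ := MvPolynomial.X 0
noncomputable abbrev q : MvPolynomial (Fin 2) ℤ := MvPolynomial.X 1

/-- `[m]_q = 1 + q + ⋯ + q^{m-1}` in `ℤ[a,q]`. -/
noncomputable def qNat (m : ℕ) : MvPolynomial (Fin 2) ℤ := ∑ i ∈ Finset.range m, q ^ i

/-- `[m]!_q = [1]_q [2]_q ⋯ [m]_q` in `ℤ[a,q]`. -/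
noncomputable def qFactorial (m : ℕ) : MvPolynomial (Fin 2) ℤ :=
  ∏ i ∈ Finset.range m, qNat (i + 1)

/-- `[m]_q` in `ℤ[q]`. -/
noncomputable def qNat' (m : ℕ) : Polynomial ℤ := ∑ i ∈ Finset.range m, Polynomial.X ^ i

/-- `[m]!_q` in `ℤ[q]`. -/
noncomputable def qFactorial' (m : ℕ) : Polynomial ℤ := ∏ i ∈ Finset.range m, qNat' (i + 1)

/-- `A` has special Smith normal form `diag d` over `R`: `P * A * Q = diagonal d` for some
`P, Q` of determinant `1`, and `d j ∣ d i` whenever `j ≤ i`. -/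
def HasSSNF {R : Type*} [CommRing R] {n : ℕ} (A : Matrix (Fin n) (Fin n) R) (d : Fin n → R) :
    Prop :=
  (∃ P Q : Matrix (Fin n) (Fin n) R, P.det = 1 ∧ Q.det = 1 ∧ P * A * Q = Matrix.diagonal d) ∧
  ∀ i j : Fin n, j ≤ i → d j ∣ d i

/-!
Over any commutative ring, `g_i([j]_t) = h_i(y_j)` with `h_i(y) = ∑ k ≤ i, A i k y ^ k` monic
and nodes `y_j = a [j]_t`, and the matrix factors as `L * diagonal d * U`. Expanding `x ^ m` on
the Newton basis `∏ l < k, (x - y l)` is a lower unitriangular change of basis, and the Newton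
basis evaluated at `y_j` is `a ^ k t ^ C(k,2) [k]!_t` times the Gaussian binomial
`[j choose k]_t`, which is upper unitriangular in `(k, j)`. The other two matrices are instances
of the first by the binomial theorem, the last one with `a = t = q` since `[j+1]_q = 1 + q [j]_q`.
-/

open Finset Matrix

section Matrices

variable {R : Type*} [CommRing R]

theorem hasSSNF_of_eq_mul_diagonal_mul {n : ℕ} {M L U : Matrix (Fin n) (Fin n) R}
    {d : Fin n → R} (hM : M = L * diagonal d * U) (hL : L.det = 1) (hU : U.det = 1)
    (hd : ∀ i j : Fin n, j ≤ i → d j ∣ d i) : HasSSNF M d := by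
  have hLu : IsUnit L.det := hL ▸ isUnit_one
  have hUu : IsUnit U.det := hU ▸ isUnit_one
  refine ⟨⟨L⁻¹, U⁻¹, by simp [hL], by simp [hU], ?_⟩, hd⟩
  simp [hM, Matrix.mul_assoc, hLu, hUu]

variable {m : Type*} [Fintype m] [DecidableEq m] [LinearOrder m] {M : Matrix m m R}

theorem det_eq_one_of_isUpperTriangular (h : M.IsUpperTriangular) (hdiag : ∀ i, M i i = 1) :
    M.det = 1 := by
  rw [det_of_isUpperTriangular h, prod_eq_one fun i _ => hdiag i]

theorem det_eq_one_of_isLowerTriangular (h : M.IsLowerTriangular) (hdiag : ∀ i, M i i = 1) :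
    M.det = 1 := by
  rw [det_of_isLowerTriangular M h, prod_eq_one fun i _ => hdiag i]

end Matrices

theorem sum_fin_eq_sum_range_of_eq_zero {M : Type*} [AddCommMonoid M] {n i : ℕ} (hi : i ≤ n)
    (f : ℕ → M) (hf : ∀ k, i < k → f k = 0) :
    ∑ k : Fin (n + 1), f k = ∑ k ∈ range (i + 1), f k := by
  rw [Fin.sum_univ_eq_sum_range f]
  refine (sum_subset (range_subset_range.mpr (by omega)) fun k _ hk => hf k ?_).symm
  simpa using hk

section Newton

variable {R : Type*} [CommRing R] (y : ℕ → R)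

/-- `newtonCoeff y m k` is the complete homogeneous symmetric polynomial of degree `m - k` in
`y 0, …, y k`: the coefficient of `x ^ m` on the Newton basis `∏ l < k, (x - y l)`. -/
def newtonCoeff : ℕ → ℕ → R
  | 0, 0 => 1
  | 0, _ + 1 => 0
  | m + 1, 0 => y 0 * newtonCoeff m 0
  | m + 1, k + 1 => newtonCoeff m k + y (k + 1) * newtonCoeff m (k + 1)

theorem newtonCoeff_eq_zero_of_lt {m k : ℕ} (h : m < k) : newtonCoeff y m k = 0 := by
  induction m generalizing k with
  | zero => cases k with
    | zero => omega
    | succ k => rfl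
  | succ m ih => cases k with
    | zero => omega
    | succ k => rw [newtonCoeff, ih (by omega), ih (by omega), mul_zero, add_zero]

theorem newtonCoeff_self (m : ℕ) : newtonCoeff y m m = 1 := by
  induction m with
  | zero => rfl
  | succ m ih => rw [newtonCoeff, ih, newtonCoeff_eq_zero_of_lt y (by omega), mul_zero, add_zero]

theorem pow_eq_sum_newtonCoeff_mul_prod (x : R) (m : ℕ) :
    x ^ m = ∑ k ∈ range (m + 1), newtonCoeff y m k * ∏ l ∈ range k, (x - y l) := by
  induction m with
  | zero => simp [newtonCoeff]
  | succ m ih =>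
    set p : ℕ → R := fun k => ∏ l ∈ range k, (x - y l)
    have hp : ∀ k, x * p k = p (k + 1) + y k * p k := fun k => by
      simp only [p, prod_range_succ]; ring
    have hshift : ∑ k ∈ range (m + 1), newtonCoeff y m k * (y k * p k)
        = y 0 * newtonCoeff y m 0 * p 0
          + ∑ k ∈ range (m + 1), y (k + 1) * newtonCoeff y m (k + 1) * p (k + 1) := by
      rw [sum_range_succ (fun k => y (k + 1) * newtonCoeff y m (k + 1) * p (k + 1)) m,
        newtonCoeff_eq_zero_of_lt y (Nat.lt_succ_self m), sum_range_succ', add_comm]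
      simp only [mul_zero, zero_mul, add_zero]
      congr 1
      · ring
      · exact sum_congr rfl fun k _ => by ring
    calc x ^ (m + 1)
        = ∑ k ∈ range (m + 1), (newtonCoeff y m k * p (k + 1)
            + newtonCoeff y m k * (y k * p k)) := by
          rw [pow_succ', ih, mul_sum]
          exact sum_congr rfl fun k _ => by rw [mul_left_comm, hp, mul_add]
      _ = ∑ k ∈ range (m + 2), newtonCoeff y (m + 1) k * p k := by
          rw [sum_add_distrib, hshift, sum_range_succ' _ (m + 1)]
          simp only [newtonCoeff, add_mul, sum_add_distrib]
          ring

end Newton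

section QAnalogues

variable {R : Type*} [CommRing R] (t : R)

def qInt (m : ℕ) : R := ∑ i ∈ range m, t ^ i

def qFact (m : ℕ) : R := ∏ i ∈ range m, qInt t (i + 1)

def qChoose : ℕ → ℕ → R
  | _, 0 => 1
  | 0, _ + 1 => 0
  | j + 1, k + 1 => qChoose j k + t ^ (k + 1) * qChoose j (k + 1)

theorem qInt_zero : qInt t 0 = 0 := rfl

theorem qInt_succ (m : ℕ) : qInt t (m + 1) = 1 + t * qInt t m := by
  rw [qInt, qInt, geom_sum_succ, add_comm]

theorem qFact_succ (m : ℕ) : qFact t (m + 1) = qFact t m * qInt t (m + 1) := prod_range_succ _ _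

theorem qFact_dvd_qFact {j i : ℕ} (h : j ≤ i) : qFact t j ∣ qFact t i :=
  prod_dvd_prod_of_subset _ _ _ (range_subset_range.mpr h)

theorem qChoose_eq_zero_of_lt {j k : ℕ} (h : j < k) : qChoose t j k = 0 := by
  induction j generalizing k with
  | zero => cases k with
    | zero => omega
    | succ k => rfl
  | succ j ih => cases k with
    | zero => omega
    | succ k => rw [qChoose, ih (by omega), ih (by omega), mul_zero, add_zero]

theorem qChoose_self (j : ℕ) : qChoose t j j = 1 := by
  induction j with
  | zero => rfl
  | succ j ih => rw [qChoose, ih, qChoose_eq_zero_of_lt t (by omega), mul_zero, add_zero]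

theorem prod_qInt_succ_sub_qInt (j k : ℕ) :
    ∏ l ∈ range (k + 1), (qInt t (j + 1) - qInt t l)
      = t ^ k * qInt t (j + 1) * ∏ l ∈ range k, (qInt t j - qInt t l) := by
  have hshift : ∀ l, qInt t (j + 1) - qInt t (l + 1) = t * (qInt t j - qInt t l) := fun l => by
    rw [qInt_succ, qInt_succ]; ring
  rw [prod_range_succ', qInt_zero, sub_zero]
  simp only [hshift, prod_mul_distrib, prod_const, card_range]
  ring

theorem prod_qInt_sub_qInt (j k : ℕ) :
    ∏ l ∈ range k, (qInt t j - qInt t l) = t ^ k.choose 2 * qFact t k * qChoose t j k := by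
  induction j generalizing k with
  | zero => cases k with
    | zero => simp [qFact, qChoose]
    | succ k =>
      rw [prod_eq_zero (mem_range.mpr k.succ_pos) (sub_self _), qChoose, mul_zero]
  | succ j ih => cases k with
    | zero => simp [qFact, qChoose]
    | succ k =>
      have hnext := ih (k + 1)
      rw [prod_range_succ, ih k, qFact_succ, Nat.choose_succ_succ', Nat.choose_one_right,
        pow_add, qInt_succ] at hnext
      rw [prod_qInt_succ_sub_qInt, ih k, qChoose, qFact_succ, Nat.choose_succ_succ',
        Nat.choose_one_right, pow_add, qInt_succ, qInt_succ]
      linear_combination t ^ (k + 1) * hnext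

end QAnalogues

section QVandermonde

variable {R : Type*} [CommRing R] (t a : R) (n : ℕ)

theorem prod_mul_qInt_sub_mul_qInt (j k : ℕ) :
    ∏ l ∈ range k, (a * qInt t j - a * qInt t l)
      = a ^ k * t ^ k.choose 2 * qFact t k * qChoose t j k := by
  simp only [← mul_sub, prod_mul_distrib, prod_const, card_range, prod_qInt_sub_qInt]
  ring

theorem vandermonde_mul_qInt_eq_mul_diagonal_mul :
    (of fun m j : Fin (n + 1) => (a * qInt t j) ^ (m : ℕ))
      = (of fun m k : Fin (n + 1) => newtonCoeff (fun l => a * qInt t l) m k)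
        * diagonal (fun k : Fin (n + 1) => a ^ (k : ℕ) * t ^ (k : ℕ).choose 2 * qFact t k)
        * of fun k j : Fin (n + 1) => qChoose t j k := by
  ext m j
  rw [Matrix.mul_assoc, mul_apply, of_apply,
    pow_eq_sum_newtonCoeff_mul_prod (fun l => a * qInt t l),
    ← sum_fin_eq_sum_range_of_eq_zero m.is_le _
      fun k hk => by rw [newtonCoeff_eq_zero_of_lt _ hk, zero_mul]]
  simp only [diagonal_mul, of_apply, prod_mul_qInt_sub_mul_qInt]

theorem hasSSNF_sum_mul_pow_mul_qInt_pow (A : ℕ → ℕ → R) (hA : ∀ i ≤ n, A i i = 1) :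
    HasSSNF (fun i j : Fin (n + 1) => ∑ k ∈ range ((i : ℕ) + 1), A i k * a ^ k * qInt t j ^ k)
      (fun i => a ^ (i : ℕ) * t ^ (i : ℕ).choose 2 * qFact t i) := by
  set L : Matrix (Fin (n + 1)) (Fin (n + 1)) R := of fun i m => if (m : ℕ) ≤ i then A i m else 0
  have hL :
      (of fun i j : Fin (n + 1) => ∑ k ∈ range ((i : ℕ) + 1), A i k * a ^ k * qInt t j ^ k)
        = L * of fun m j : Fin (n + 1) => (a * qInt t j) ^ (m : ℕ) := by
    ext i j
    simp only [L, mul_apply, of_apply]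
    rw [sum_fin_eq_sum_range_of_eq_zero i.is_le
      (fun m => (if m ≤ i then A i m else 0) * (a * qInt t j) ^ m)
      fun m hm => by rw [if_neg (by omega), zero_mul]]
    refine sum_congr rfl fun m hm => ?_
    rw [if_pos (Nat.lt_succ_iff.mp (mem_range.mp hm)), mul_pow, mul_assoc]
  set S : Matrix (Fin (n + 1)) (Fin (n + 1)) R :=
    of fun m k => newtonCoeff (fun l => a * qInt t l) m k
  have hLdet : L.det = 1 := det_eq_one_of_isLowerTriangular
    (fun i m (h : i < m) => if_neg (not_le.mpr h)) fun i => (if_pos le_rfl).trans (hA i i.is_le)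
  have hSdet : S.det = 1 := det_eq_one_of_isLowerTriangular
    (fun m k (h : m < k) => newtonCoeff_eq_zero_of_lt _ h) fun m => newtonCoeff_self _ _
  refine hasSSNF_of_eq_mul_diagonal_mul (L := L * S) (U := of fun k j => qChoose t j k)
    ?_ (by rw [det_mul, hLdet, hSdet, one_mul])
    (det_eq_one_of_isUpperTriangular (fun k j (h : j < k) => qChoose_eq_zero_of_lt t h)
      fun k => qChoose_self t k) ?_
  · refine hL.trans ?_
    rw [vandermonde_mul_qInt_eq_mul_diagonal_mul]
    simp only [S, Matrix.mul_assoc]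
  · intro i j (hji : (j : ℕ) ≤ i)
    exact mul_dvd_mul
      (mul_dvd_mul (pow_dvd_pow a hji) (pow_dvd_pow t (Nat.choose_le_choose 2 hji)))
      (qFact_dvd_qFact t hji)

end QVandermonde

theorem hasSSNF_one_add_mul_qInt_pow {R : Type*} [CommRing R] (t a : R) (n : ℕ) :
    HasSSNF (fun i j : Fin (n + 1) => (1 + a * qInt t j) ^ (i : ℕ))
      (fun i => a ^ (i : ℕ) * t ^ (i : ℕ).choose 2 * qFact t i) := by
  have hbinom : (fun i j : Fin (n + 1) => (1 + a * qInt t j) ^ (i : ℕ))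
      = fun i j : Fin (n + 1) =>
          ∑ k ∈ range ((i : ℕ) + 1), ((i : ℕ).choose k : R) * a ^ k * qInt t j ^ k := by
    funext i j
    rw [add_comm, add_pow]
    exact sum_congr rfl fun k _ => by ring
  rw [hbinom]
  exact hasSSNF_sum_mul_pow_mul_qInt_pow t a n (fun i k => (i.choose k : R)) fun i _ => by simp

/-- For any coefficients `A i k ∈ ℤ[a,q]` with `A i i = 1`, putting
`g_i(x) = ∑_{k=0}^i A i k a^k x^k`, the matrix `(g_i([j]_q))_{0≤i,j≤n}` has SSNF
`diag(1, a q^{C(1,2)} [1]!_q, …, aⁿ q^{C(n,2)} [n]!_q)` over `ℤ[a,q]`. In particular the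
Vandermonde matrix `((1 + a[j]_q)^i)` has this SSNF, and (over `ℤ[q]`) the Vandermonde
matrix `(([j+1]_q)^i)` has SSNF `diag(1, q^{C(2,2)}[1]!_q, …, q^{C(n+1,2)}[n]!_q)`. -/
theorem vandermonde_SSNF (n : ℕ) :
    (∀ A : ℕ → ℕ → MvPolynomial (Fin 2) ℤ, (∀ i : ℕ, i ≤ n → A i i = 1) →
      HasSSNF (fun i j : Fin (n+1) =>
          ∑ k ∈ Finset.range ((i : ℕ) + 1), A (i : ℕ) k * a ^ k * qNat (j : ℕ) ^ k)
        (fun i => a ^ (i : ℕ) * q ^ ((i : ℕ).choose 2) * qFactorial (i : ℕ))) ∧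
    HasSSNF (fun i j : Fin (n+1) => (1 + a * qNat (j : ℕ)) ^ (i : ℕ))
      (fun i => a ^ (i : ℕ) * q ^ ((i : ℕ).choose 2) * qFactorial (i : ℕ)) ∧
    HasSSNF (fun i j : Fin (n+1) => qNat' ((j : ℕ) + 1) ^ (i : ℕ))
      (fun i => Polynomial.X ^ (((i : ℕ) + 1).choose 2) * qFactorial' (i : ℕ)) := by
  refine ⟨hasSSNF_sum_mul_pow_mul_qInt_pow q a n, hasSSNF_one_add_mul_qInt_pow q a n, ?_⟩
  have hM : (fun i j : Fin (n + 1) => qNat' ((j : ℕ) + 1) ^ (i : ℕ))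
      = fun i j : Fin (n + 1) => (1 + Polynomial.X * qInt Polynomial.X j) ^ (i : ℕ) := by
    funext i j
    rw [← qInt_succ]
    rfl
  have hd : (fun i : Fin (n + 1) => Polynomial.X ^ ((i : ℕ) + 1).choose 2 * qFactorial' i)
      = fun i : Fin (n + 1) => Polynomial.X ^ (i : ℕ) * Polynomial.X ^ (i : ℕ).choose 2
          * qFact Polynomial.X i := by
    funext i
    rw [← pow_add, Nat.choose_succ_succ', Nat.choose_one_right]
    rfl
  rw [hM, hd]
  exact hasSSNF_one_add_mul_qInt_pow Polynomial.X Polynomial.X n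

end Stmt19
end
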